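/- arXiv:2605.31168 — 6 statements merged into one kernel-verified Lean document; each statement's English description precedes it below -/
import Mathlib

section
/- Fix integers N ≥ 1 and n1, n2 ≥ 0 with n1 + n2 = N. There exists a constant C > 0 (depending only on N) such that for all sufficiently large d, |TVD_agg(d, n1, n2) − n1·n2/d| ≤ C/d². -/
open Finset Filter Topology

set_option maxHeartbeats 1000000

noncomputable section

/-- `Lfun lam n1` is the number of vectors `a : Fin d → ℕ` with `a j ≤ lam j` for all `j`
and `∑ j, a j = n1`. -/
def Lfun {d : ℕ} (lam : Fin d → ℕ) (n1 : ℕ) : ℕ :=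
  ((Finset.Nat.antidiagonalTuple d n1).filter fun a => ∀ j, a j ≤ lam j).card

/-- The aggregate total variation distance between the Haar-averaged histogram laws. -/
def TVDagg (d n1 n2 : ℕ) : ℝ :=
  (1 / 2) * ∑ lam ∈ Finset.Nat.antidiagonalTuple d (n1 + n2),
    |1 / ((n1 + n2 + d - 1).choose (d - 1) : ℝ) -
      (Lfun lam n1 : ℝ) /
        (((n1 + d - 1).choose (d - 1) : ℝ) * ((n2 + d - 1).choose (d - 1) : ℝ))|

lemma mcard_sum {ι : Type*} (s : Finset ι) {α : Type*} (f : ι → Multiset α) :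
    Multiset.card (∑ i ∈ s, f i) = ∑ i ∈ s, Multiset.card (f i) := by
  classical
  induction s using Finset.induction with
  | empty => simp
  | insert _ _ h ih => simp [Finset.sum_insert h, ih]

lemma key1 {d : ℕ} (μ : Multiset (Fin d)) : ∑ x : Fin d, μ.count x = Multiset.card μ := by
  rw [← Multiset.toFinset_sum_count_eq]
  exact (Finset.sum_subset (Finset.subset_univ _) (by
    intro x _ hx
    simpa [Multiset.count_eq_zero] using fun h => hx (Multiset.mem_toFinset.2 h))).symm

lemma key2 {d : ℕ} (μ : Multiset (Fin d)) :
    ∑ x : Fin d, Multiset.replicate (μ.count x) x = μ := by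
  conv_rhs => rw [← Multiset.toFinset_sum_count_nsmul_eq μ]
  rw [← Finset.sum_subset (Finset.subset_univ μ.toFinset) (by
    intro x _ hx
    have : μ.count x = 0 := by
      simpa [Multiset.count_eq_zero] using fun h => hx (Multiset.mem_toFinset.2 h)
    simp [this])]
  refine Finset.sum_congr rfl fun x _ => ?_
  simp [Multiset.nsmul_singleton]

lemma key3 {d : ℕ} (lam : Fin d → ℕ) (x : Fin d) :
    (∑ j : Fin d, Multiset.replicate (lam j) j).count x = lam x := by
  rw [Multiset.count_sum']
  simp [Multiset.count_replicate]

lemma card_adt (d m : ℕ) (hd : 1 ≤ d) :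
    (Finset.Nat.antidiagonalTuple d m).card = (m + d - 1).choose (d - 1) := by
  have e : {lam // lam ∈ Finset.Nat.antidiagonalTuple d m} ≃ Sym (Fin d) m :=
    { toFun := fun lam => ⟨∑ j : Fin d, Multiset.replicate (lam.1 j) j, by
        rw [mcard_sum]
        simpa using (Finset.Nat.mem_antidiagonalTuple.1 lam.2)⟩
      invFun := fun μ => ⟨fun x => μ.1.count x, by
        rw [Finset.Nat.mem_antidiagonalTuple, key1, μ.2]⟩
      left_inv := fun lam => by
        ext x
        exact key3 _ x
      right_inv := fun μ => by
        ext1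
        exact key2 μ.1 }
  have h1 : (Finset.Nat.antidiagonalTuple d m).card = Fintype.card (Sym (Fin d) m) := by
    rw [← Fintype.card_coe]
    exact Fintype.card_congr e
  rw [h1, Sym.card_sym_eq_multichoose, Fintype.card_fin, Nat.multichoose_eq]
  rw [← Nat.choose_symm (by omega : m ≤ d + m - 1)]
  congr 1 <;> omega

section EboxSec
variable {d : ℕ}

def Ebox (lam : Fin d → ℕ) : Finset ((_ : Fin d) × ℕ) :=
  Finset.univ.sigma fun j => Finset.range (lam j)

lemma mem_Ebox {lam : Fin d → ℕ} {j : Fin d} {k : ℕ} :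
    (⟨j, k⟩ : (_ : Fin d) × ℕ) ∈ Ebox lam ↔ k < lam j := by
  simp [Ebox]

lemma card_Ebox (lam : Fin d → ℕ) : (Ebox lam).card = ∑ j, lam j := by
  simp [Ebox, Finset.card_sigma]

lemma phi_inj (a a' : Fin d → ℕ) (h : Ebox a = Ebox a') : a = a' := by
  funext j
  have hh : ∀ k : ℕ, k < a j ↔ k < a' j := by
    intro k
    rw [← mem_Ebox (lam := a), ← mem_Ebox (lam := a'), h]
  have h1 := hh (a j)
  have h2 := hh (a' j)
  omega

lemma phi_mem {lam a : Fin d → ℕ} {N n1 : ℕ}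
    (hlam : lam ∈ Finset.Nat.antidiagonalTuple d N)
    (ha : a ∈ (Finset.Nat.antidiagonalTuple d n1).filter fun a => ∀ j, a j ≤ lam j) :
    Ebox a ∈ (Ebox lam).powersetCard n1 := by
  rw [Finset.mem_filter, Finset.Nat.mem_antidiagonalTuple] at ha
  rw [Finset.mem_powersetCard]
  refine ⟨fun x hx => ?_, ?_⟩
  · obtain ⟨x1, x2⟩ := x
    exact mem_Ebox.2 (lt_of_lt_of_le (mem_Ebox.1 hx) (ha.2 x1))
  · rw [card_Ebox, ha.1]

lemma Lfun_le {lam : Fin d → ℕ} {N n1 : ℕ}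
    (hlam : lam ∈ Finset.Nat.antidiagonalTuple d N) : Lfun lam n1 ≤ N.choose n1 := by
  have h : ((Finset.Nat.antidiagonalTuple d n1).filter fun a => ∀ j, a j ≤ lam j).card ≤
      ((Ebox lam).powersetCard n1).card :=
    Finset.card_le_card_of_injOn Ebox (fun a ha => phi_mem hlam ha)
      (fun a _ a' _ h => phi_inj a a' h)
  rwa [Finset.card_powersetCard, card_Ebox,
    (Finset.Nat.mem_antidiagonalTuple.1 hlam)] at h

lemma Lfun_eq {lam : Fin d → ℕ} {N n1 : ℕ}
    (hlam : lam ∈ Finset.Nat.antidiagonalTuple d N) (h01 : ∀ j, lam j ≤ 1) :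
    Lfun lam n1 = N.choose n1 := by
  have h := Finset.card_bij (fun a (_ : a ∈ (Finset.Nat.antidiagonalTuple d n1).filter
      fun a => ∀ j, a j ≤ lam j) => Ebox a)
    (fun a ha => phi_mem hlam ha)
    (fun a ha a' ha' h => phi_inj a a' h)
    ?_
  · rw [Finset.card_powersetCard, card_Ebox, (Finset.Nat.mem_antidiagonalTuple.1 hlam)] at h
    exact h
  · intro T hT
    rw [Finset.mem_powersetCard] at hT
    set a : Fin d → ℕ := fun j => if (⟨j, 0⟩ : (_ : Fin d) × ℕ) ∈ T then 1 else 0 with ha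
    have hTmem : ∀ x1 : Fin d, ∀ x2 : ℕ, (⟨x1, x2⟩ : (_ : Fin d) × ℕ) ∈ T → x2 = 0 := by
      intro x1 x2 hx
      have h1 := mem_Ebox.1 (hT.1 hx)
      have h2 := h01 x1
      omega
    have hPhi : Ebox a = T := by
      ext x
      obtain ⟨x1, x2⟩ := x
      rw [mem_Ebox]
      constructor
      · intro hx
        have h1 : a x1 = 1 ∧ x2 = 0 := by
          by_cases hc : (⟨x1, 0⟩ : (_ : Fin d) × ℕ) ∈ T <;> simp [ha, hc] at hx ⊢ <;> omega
        obtain ⟨h1, rfl⟩ := h1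
        simp only [ha, ite_eq_iff] at h1
        rcases h1 with ⟨hmem, -⟩ | ⟨-, h⟩
        · exact hmem
        · omega
      · intro hx
        have h2 := hTmem x1 x2 hx
        subst h2
        simp [ha, hx]
    refine ⟨a, ?_, hPhi⟩
    rw [Finset.mem_filter, Finset.Nat.mem_antidiagonalTuple]
    constructor
    · have : ∑ j, a j = (Ebox a).card := (card_Ebox a).symm
      rw [this, hPhi, hT.2]
    · intro j
      by_cases hc : (⟨j, 0⟩ : (_ : Fin d) × ℕ) ∈ T
      · have := mem_Ebox.1 (hT.1 hc)
        simp only [ha, if_pos hc]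
        omega
      · simp [ha, hc]

lemma Lfun_lt {lam : Fin d → ℕ} {N n1 n2 : ℕ} (hn1 : 1 ≤ n1) (hn2 : 1 ≤ n2)
    (hsum : n1 + n2 = N)
    (hlam : lam ∈ Finset.Nat.antidiagonalTuple d N) (j0 : Fin d) (hj0 : 2 ≤ lam j0) :
    Lfun lam n1 + 1 ≤ N.choose n1 := by
  have hlam' := hlam
  rw [Finset.Nat.mem_antidiagonalTuple] at hlam'
  have hE : (Ebox lam).card = N := by rw [card_Ebox, hlam']
  have h0 : (⟨j0, 0⟩ : (_ : Fin d) × ℕ) ∈ Ebox lam := mem_Ebox.2 (by omega)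
  have h1 : (⟨j0, 1⟩ : (_ : Fin d) × ℕ) ∈ Ebox lam := mem_Ebox.2 (by omega)
  have hcard2 : n1 - 1 ≤ (((Ebox lam).erase ⟨j0, 1⟩).erase ⟨j0, 0⟩).card := by
    rw [Finset.card_erase_of_mem (Finset.mem_erase.2 ⟨by simp, h0⟩),
      Finset.card_erase_of_mem h1, hE]
    omega
  obtain ⟨S, hS, hScard⟩ := Finset.exists_subset_card_eq hcard2
  set T := insert (⟨j0, 1⟩ : (_ : Fin d) × ℕ) S with hTdef
  have h1S : (⟨j0, 1⟩ : (_ : Fin d) × ℕ) ∉ S := fun h => by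
    have := hS h; simp [Finset.mem_erase] at this
  have h0T : (⟨j0, 0⟩ : (_ : Fin d) × ℕ) ∉ T := by
    rw [hTdef, Finset.mem_insert]
    rintro (h | h)
    · simp at h
    · have := hS h; simp [Finset.mem_erase] at this
  have hTpc : T ∈ (Ebox lam).powersetCard n1 := by
    rw [Finset.mem_powersetCard]
    constructor
    · rw [hTdef]
      intro x hx
      rcases Finset.mem_insert.1 hx with rfl | hx
      · exact h1
      · exact Finset.erase_subset _ _ (Finset.erase_subset _ _ (hS hx))
    · rw [hTdef, Finset.card_insert_of_notMem h1S, hScard]; omega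
  set Adm := (Finset.Nat.antidiagonalTuple d n1).filter fun a => ∀ j, a j ≤ lam j with hAdm
  have hss : Adm.image Ebox ⊂ (Ebox lam).powersetCard n1 := by
    rw [Finset.ssubset_iff_of_subset (fun x hx => by
      obtain ⟨a, ha, rfl⟩ := Finset.mem_image.1 hx
      exact phi_mem hlam ha)]
    refine ⟨T, hTpc, fun hmem => ?_⟩
    obtain ⟨a, ha, hPhi⟩ := Finset.mem_image.1 hmem
    have h1a : (⟨j0, 1⟩ : (_ : Fin d) × ℕ) ∈ Ebox a := by
      rw [hPhi, hTdef]; exact Finset.mem_insert_self _ _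
    have h0a : (⟨j0, 0⟩ : (_ : Fin d) × ℕ) ∈ Ebox a := by
      have := mem_Ebox.1 h1a
      exact mem_Ebox.2 (by omega)
    rw [hPhi] at h0a
    exact h0T h0a
  have hlt := Finset.card_lt_card hss
  rw [Finset.card_image_of_injOn (fun a _ a' _ h => phi_inj a a' h),
    Finset.card_powersetCard, hE] at hlt
  rw [Lfun, ← hAdm]
  omega

end EboxSec

section CountSec
variable {d : ℕ}

lemma card_good (N : ℕ) :
    (((Finset.Nat.antidiagonalTuple d N)).filter fun lam => ∀ j, lam j ≤ 1).card
      = d.choose N := by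
  have h := Finset.card_bij (t := Finset.powersetCard N (Finset.univ : Finset (Fin d)))
    (fun (lam : Fin d → ℕ) (_ : lam ∈ (Finset.Nat.antidiagonalTuple d N).filter
        fun lam => ∀ j, lam j ≤ 1) => Finset.univ.filter fun j => lam j = 1)
    ?_ ?_ ?_
  · rw [Finset.card_powersetCard, Finset.card_univ, Fintype.card_fin] at h
    exact h
  · intro lam hlam
    rw [Finset.mem_filter, Finset.Nat.mem_antidiagonalTuple] at hlam
    rw [Finset.mem_powersetCard]
    refine ⟨Finset.filter_subset _ _, ?_⟩
    rw [← hlam.1]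
    rw [Finset.card_filter]
    refine Finset.sum_congr rfl fun j _ => ?_
    have := hlam.2 j
    interval_cases h : lam j <;> simp
  · intro lam hlam lam' hlam' h
    rw [Finset.mem_filter] at hlam hlam'
    funext j
    have h1 := hlam.2 j
    have h2 := hlam'.2 j
    have := Finset.ext_iff.1 h j
    simp only [Finset.mem_filter, Finset.mem_univ, true_and] at this
    omega
  · intro s hs
    rw [Finset.mem_powersetCard] at hs
    refine ⟨fun j => if j ∈ s then 1 else 0, ?_, ?_⟩
    · rw [Finset.mem_filter, Finset.Nat.mem_antidiagonalTuple]
      constructor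
      · rw [Finset.sum_ite_mem, Finset.univ_inter, Finset.sum_const, smul_eq_mul, mul_one, hs.2]
      · intro j; dsimp only; split <;> omega
    · ext j
      simp only [Finset.mem_filter, Finset.mem_univ, true_and]
      split <;> simp_all

lemma sum_Lfun (N n1 n2 : ℕ) (hsum : n1 + n2 = N) :
    ∑ lam ∈ Finset.Nat.antidiagonalTuple d N, Lfun lam n1
      = (Finset.Nat.antidiagonalTuple d n1).card * (Finset.Nat.antidiagonalTuple d n2).card := by
  classical
  simp only [Lfun]
  rw [← Finset.card_sigma, ← Finset.card_product]
  apply Finset.card_nbij' (fun x : (_ : Fin d → ℕ) × (Fin d → ℕ) =>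
      (x.2, fun j => x.1 j - x.2 j))
    (fun p : (Fin d → ℕ) × (Fin d → ℕ) => ⟨fun j => p.1 j + p.2 j, p.1⟩)
  · rintro ⟨lam, a⟩ hx
    rw [Finset.mem_coe, Finset.mem_sigma] at hx
    obtain ⟨hlam, ha⟩ := hx
    rw [Finset.mem_filter, Finset.Nat.mem_antidiagonalTuple] at ha
    rw [Finset.Nat.mem_antidiagonalTuple] at hlam
    dsimp only at ha hlam ⊢
    rw [Finset.mem_coe, Finset.mem_product, Finset.Nat.mem_antidiagonalTuple, Finset.Nat.mem_antidiagonalTuple]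
    refine ⟨ha.1, ?_⟩
    have : ∑ j, (lam j - a j) = (∑ j, lam j) - ∑ j, a j :=
      Finset.sum_tsub_distrib Finset.univ (fun j _ => ha.2 j)
    rw [this, hlam, ha.1]
    omega
  · rintro ⟨b, a⟩ hp
    rw [Finset.mem_coe, Finset.mem_product, Finset.Nat.mem_antidiagonalTuple,
      Finset.Nat.mem_antidiagonalTuple] at hp
    dsimp only at hp ⊢
    rw [Finset.mem_coe, Finset.mem_sigma, Finset.Nat.mem_antidiagonalTuple, Finset.mem_filter,
      Finset.Nat.mem_antidiagonalTuple]
    refine ⟨?_, hp.1, fun j => by dsimp only; omega⟩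
    rw [Finset.sum_add_distrib, hp.1, hp.2, hsum]
  · rintro ⟨lam, a⟩ hx
    rw [Finset.mem_coe, Finset.mem_sigma, Finset.mem_filter] at hx
    have ha := hx.2.2
    dsimp only at ha
    show (⟨fun j => a j + (lam j - a j), a⟩ : (_ : Fin d → ℕ) × (Fin d → ℕ)) = ⟨lam, a⟩
    congr 1
    funext j
    have := ha j
    omega
  · rintro ⟨b, a⟩ hp
    show ((b, fun j => (b j + a j) - b j) : (Fin d → ℕ) × (Fin d → ℕ)) = (b, a)
    congr 1
    funext j
    omega

end CountSec

lemma prod_one_add_est {ι : Type*} (s : Finset ι) (x : ι → ℝ)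
    (h : ∑ i ∈ s, |x i| ≤ 1 / 2) :
    |∏ i ∈ s, (1 + x i) - 1| ≤ 2 * ∑ i ∈ s, |x i| ∧
    |∏ i ∈ s, (1 + x i) - 1 - ∑ i ∈ s, x i| ≤ (∑ i ∈ s, |x i|) ^ 2 := by
  classical
  induction s using Finset.cons_induction with
  | empty => simp
  | cons a s ha ih =>
    rw [Finset.sum_cons] at h
    have hy : 0 ≤ |x a| := abs_nonneg _
    have hSnn : 0 ≤ ∑ i ∈ s, |x i| := Finset.sum_nonneg fun i _ => abs_nonneg _
    have hS : ∑ i ∈ s, |x i| ≤ 1 / 2 := by linarith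
    obtain ⟨ih1, ih2⟩ := ih hS
    set P := ∏ i ∈ s, (1 + x i)
    set S := ∑ i ∈ s, |x i|
    set Sg := ∑ i ∈ s, x i
    rw [Finset.prod_cons, Finset.sum_cons, Finset.sum_cons]
    constructor
    · have key : (1 + x a) * P - 1 = (P - 1) * (1 + x a) + x a := by ring
      rw [key]
      calc |(P - 1) * (1 + x a) + x a| ≤ |P - 1| * |1 + x a| + |x a| := by
              refine (abs_add_le _ _).trans ?_
              rw [abs_mul]
        _ ≤ (2 * S) * (1 + |x a|) + |x a| := by
              have h1 : |1 + x a| ≤ 1 + |x a| := (abs_add_le _ _).trans (by simp)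
              have := mul_le_mul ih1 h1 (abs_nonneg _) (by linarith)
              linarith
        _ ≤ 2 * (|x a| + S) := by nlinarith [hS, hy]
    · have key : (1 + x a) * P - 1 - (x a + Sg) = (P - 1 - Sg) + x a * (P - 1) := by ring
      rw [key]
      calc |(P - 1 - Sg) + x a * (P - 1)| ≤ |P - 1 - Sg| + |x a| * |P - 1| := by
              refine (abs_add_le _ _).trans ?_
              rw [abs_mul]
        _ ≤ S ^ 2 + |x a| * (2 * S) := by
              have := mul_le_mul_of_nonneg_left ih1 hy
              linarith
        _ ≤ (|x a| + S) ^ 2 := by nlinarith [hy, hSnn]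

lemma asc_prod (d : ℕ) : ∀ m : ℕ, d.ascFactorial m = ∏ i ∈ Finset.range m, (d + i)
  | 0 => by simp
  | m + 1 => by rw [Nat.ascFactorial_succ, Finset.prod_range_succ, asc_prod d m]; ring

lemma cast_choose_asc (d m : ℕ) (hd : 1 ≤ d) :
    ((m + d - 1).choose (d - 1) : ℝ) = (∏ i ∈ Finset.range m, ((d : ℝ) + i)) / m.factorial := by
  have h1 : (m + d - 1).choose (d - 1) = (d + m - 1).choose m := by
    rw [← Nat.choose_symm (by omega : m ≤ d + m - 1)]
    congr 1 <;> omega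
  have h2 : d.ascFactorial m = m.factorial * (d + m - 1).choose m :=
    Nat.ascFactorial_eq_factorial_mul_choose' d m
  have h3 : (d.ascFactorial m : ℝ) = ∏ i ∈ Finset.range m, ((d : ℝ) + i) := by
    rw [asc_prod]
    push_cast
    rfl
  rw [h1, eq_div_iff (by positivity), mul_comm, ← h3, h2]
  push_cast
  ring

lemma cast_choose_desc (d N : ℕ) (hd : N ≤ d) :
    ((d.choose N : ℕ) : ℝ) = (∏ i ∈ Finset.range N, ((d : ℝ) - i)) / N.factorial := by
  have h2 : d.descFactorial N = N.factorial * d.choose N :=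
    Nat.descFactorial_eq_factorial_mul_choose d N
  have h3 : (d.descFactorial N : ℝ) = ∏ i ∈ Finset.range N, ((d : ℝ) - i) := by
    rw [Nat.descFactorial_eq_prod_range]
    push_cast
    refine Finset.prod_congr rfl fun i hi => ?_
    rw [Finset.mem_range] at hi
    rw [Nat.cast_sub (by omega)]
  rw [eq_div_iff (by positivity), mul_comm, ← h3, h2]
  push_cast
  ring

lemma tri6 (a b c d e f : ℝ) :
    |a + b - c + d + e + f| ≤ |a| + |b| + |c| + |d| + |e| + |f| := by
  have h1 := abs_add_le (a + b - c + d + e) f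
  have h2 := abs_add_le (a + b - c + d) e
  have h3 := abs_add_le (a + b - c) d
  have h4 := abs_sub (a + b) c
  have h5 := abs_add_le a b
  linarith

lemma tri4 (a b c d : ℝ) : |a + b - c + d| ≤ |a| + |b| + |c| + |d| := by
  have h3 := abs_add_le (a + b - c) d
  have h4 := abs_sub (a + b) c
  have h5 := abs_add_le a b
  linarith

lemma final_combine (A B1 B2 BN s1 s2 sN w y z : ℝ)
    (hy0 : 0 ≤ y) (hyq : y ≤ 1/4) (hz : y ^ 2 = z)
    (hA : |A - 1| ≤ 2 * y) (h1 : |B1 - 1| ≤ 2 * y) (h2 : |B2 - 1| ≤ 2 * y)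
    (hN : |BN - 1| ≤ 2 * y)
    (he1 : |B1 - 1 - s1| ≤ z) (he2 : |B2 - 1 - s2| ≤ z) (heN : |BN - 1 - sN| ≤ z)
    (hsig : |s1 + s2 - sN - w| ≤ 3 * z) :
    |A * B1 * B2 - A * BN - w| ≤ 25 * z := by
  have hz0 : 0 ≤ z := hz ▸ sq_nonneg y
  have hTeq : A * B1 * B2 - A * BN - w
      = (B1 - 1 - s1) + (B2 - 1 - s2) - (BN - 1 - sN) + (s1 + s2 - sN - w)
        + (B1 - 1) * (B2 - 1)
        + (A - 1) * ((B1 - 1) + (B2 - 1) - (BN - 1) + (B1 - 1) * (B2 - 1)) := by ring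
  have hu1u2 : |(B1 - 1) * (B2 - 1)| ≤ 4 * z := by
    rw [abs_mul]
    calc |B1 - 1| * |B2 - 1| ≤ (2 * y) * (2 * y) :=
          mul_le_mul h1 h2 (abs_nonneg _) (by linarith)
      _ = 4 * y ^ 2 := by ring
      _ = 4 * z := by rw [hz]
  have hδw : |(A - 1) * ((B1 - 1) + (B2 - 1) - (BN - 1) + (B1 - 1) * (B2 - 1))| ≤ 14 * z := by
    rw [abs_mul]
    have hw : |(B1 - 1) + (B2 - 1) - (BN - 1) + (B1 - 1) * (B2 - 1)| ≤ 6 * y + 4 * z := by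
      have := tri4 (B1 - 1) (B2 - 1) (BN - 1) ((B1 - 1) * (B2 - 1))
      linarith
    calc |A - 1| * |(B1 - 1) + (B2 - 1) - (BN - 1) + (B1 - 1) * (B2 - 1)|
        ≤ (2 * y) * (6 * y + 4 * z) :=
          mul_le_mul hA hw (abs_nonneg _) (by linarith)
      _ = 12 * y ^ 2 + 8 * (y * z) := by ring
      _ ≤ 14 * z := by nlinarith [mul_nonneg hy0 hz0]
  rw [hTeq]
  have htri := tri6 (B1 - 1 - s1) (B2 - 1 - s2) (BN - 1 - sN) (s1 + s2 - sN - w)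
    ((B1 - 1) * (B2 - 1))
    ((A - 1) * ((B1 - 1) + (B2 - 1) - (BN - 1) + (B1 - 1) * (B2 - 1)))
  linarith

lemma sum_range_split (n1 n2 : ℕ) :
    ∑ i ∈ Finset.range (n1 + n2), i
      = (∑ i ∈ Finset.range n1, i) + (∑ i ∈ Finset.range n2, i) + n1 * n2 := by
  induction n2 with
  | zero => simp
  | succ m ih =>
    rw [← Nat.add_assoc, Finset.sum_range_succ, Finset.sum_range_succ, ih, Nat.mul_succ]
    omega

lemma est_core (N n1 n2 d : ℕ) (hn1 : 1 ≤ n1) (hn2 : 1 ≤ n2) (hsum : n1 + n2 = N)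
    (hd : 4 * N ^ 4 + N + 4 ≤ d) :
    |(∏ i ∈ Finset.range N, ((d : ℝ) - i)) /
        ((∏ i ∈ Finset.range n1, ((d : ℝ) + i)) * ∏ i ∈ Finset.range n2, ((d : ℝ) + i))
      - (∏ i ∈ Finset.range N, ((d : ℝ) - i)) / (∏ i ∈ Finset.range N, ((d : ℝ) + i))
      - (n1 * n2 : ℝ) / d| ≤ 25 * (N : ℝ) ^ 4 / d ^ 2 := by
  have hN : 1 ≤ N := by omega
  have hn1N : n1 ≤ N := by omega
  have hn2N : n2 ≤ N := by omega
  set x : ℝ := (d : ℝ) with hxdef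
  have hN1 : (1 : ℝ) ≤ (N : ℝ) := by exact_mod_cast hN
  have hbig : ((4 * N ^ 4 + N + 4 : ℕ) : ℝ) ≤ x := Nat.cast_le.2 hd
  push_cast at hbig
  clear_value x
  have hN4 : (1 : ℝ) ≤ (N : ℝ) ^ 4 := by
    calc (1 : ℝ) = 1 ^ 4 := by norm_num
      _ ≤ (N : ℝ) ^ 4 := pow_le_pow_left₀ zero_le_one hN1 4
  have hN2 : (1 : ℝ) ≤ (N : ℝ) ^ 2 := by
    calc (1 : ℝ) = 1 ^ 2 := by norm_num
      _ ≤ (N : ℝ) ^ 2 := pow_le_pow_left₀ zero_le_one hN1 2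
  have hN42 : (N : ℝ) ^ 2 ≤ (N : ℝ) ^ 4 := by nlinarith
  have hx : (0 : ℝ) < x := by nlinarith
  have hNx : (N : ℝ) < x := by nlinarith
  have h4N4x : 4 * (N : ℝ) ^ 4 ≤ x := by nlinarith
  have hN2x : 4 * (N : ℝ) ^ 2 ≤ x := by nlinarith
  set a : ℕ → ℝ := fun i => -(i : ℝ) / x with hadef
  set b : ℕ → ℝ := fun i => -(i : ℝ) / (x + i) with hbdef
  have hxi : ∀ i : ℕ, (0 : ℝ) < x + i := fun i => by positivity
  clear_value a b
  have ha_id : ∀ i : ℕ, 1 + a i = (x - i) / x := by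
    intro i; rw [hadef]; field_simp; ring
  have hb_id : ∀ i : ℕ, 1 + b i = x / (x + i) := by
    intro i; rw [hbdef]; field_simp; ring
  have habs_a : ∀ i : ℕ, i < N → |a i| ≤ (N : ℝ) / x := by
    intro i hi
    rw [hadef]
    simp only [neg_div, abs_neg]
    rw [abs_div, abs_of_nonneg (by positivity : (0:ℝ) ≤ (i:ℝ)), abs_of_pos hx]
    exact div_le_div₀ (by positivity) (by exact_mod_cast hi.le) hx le_rfl
  have habs_b : ∀ i : ℕ, i < N → |b i| ≤ (N : ℝ) / x := by
    intro i hi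
    rw [hbdef]
    simp only [neg_div, abs_neg]
    rw [abs_div, abs_of_nonneg (by positivity : (0:ℝ) ≤ (i:ℝ)), abs_of_pos (hxi i)]
    exact div_le_div₀ (by positivity) (by exact_mod_cast hi.le) hx (by linarith [hxi i, (by positivity : (0:ℝ) ≤ (i:ℝ))])
  have hsum_abs : ∀ (c : ℕ → ℝ), (∀ i, i < N → |c i| ≤ (N:ℝ)/x) → ∀ m : ℕ, m ≤ N →
      ∑ i ∈ Finset.range m, |c i| ≤ (N : ℝ) ^ 2 / x := by
    intro c hc m hm
    calc ∑ i ∈ Finset.range m, |c i| ≤ ∑ _i ∈ Finset.range m, (N : ℝ) / x :=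
          Finset.sum_le_sum fun i hi => hc i (lt_of_lt_of_le (Finset.mem_range.1 hi) hm)
      _ = (m : ℝ) * ((N : ℝ) / x) := by rw [Finset.sum_const, Finset.card_range, nsmul_eq_mul]
      _ ≤ (N : ℝ) * ((N : ℝ) / x) := by
          have h1 : (m : ℝ) ≤ (N : ℝ) := by exact_mod_cast hm
          have hp : (0:ℝ) ≤ (N : ℝ) / x := by positivity
          nlinarith
      _ = (N : ℝ) ^ 2 / x := by ring
  have hsum_a := hsum_abs a habs_a
  have hsum_b := hsum_abs b habs_b
  have hquarter : (N : ℝ) ^ 2 / x ≤ 1 / 4 := by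
    rw [div_le_iff₀ hx]; nlinarith
  have hhalf : (N : ℝ) ^ 2 / x ≤ 1 / 2 := by linarith
  obtain ⟨hA1, hA2⟩ := prod_one_add_est (Finset.range N) a ((hsum_a N le_rfl).trans hhalf)
  obtain ⟨hB11, hB12⟩ := prod_one_add_est (Finset.range n1) b ((hsum_b n1 hn1N).trans hhalf)
  obtain ⟨hB21, hB22⟩ := prod_one_add_est (Finset.range n2) b ((hsum_b n2 hn2N).trans hhalf)
  obtain ⟨hBN1, hBN2⟩ := prod_one_add_est (Finset.range N) b ((hsum_b N le_rfl).trans hhalf)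
  -- rewrite quotients as products of (1 + ...)
  have hQ : ∏ i ∈ Finset.range N, (x - (i:ℝ)) = x ^ N * ∏ i ∈ Finset.range N, (1 + a i) := by
    calc ∏ i ∈ Finset.range N, (x - (i:ℝ)) = ∏ i ∈ Finset.range N, (x * (1 + a i)) := by
          refine Finset.prod_congr rfl fun i _ => ?_
          rw [ha_id]
          field_simp
      _ = (∏ _i ∈ Finset.range N, x) * ∏ i ∈ Finset.range N, (1 + a i) :=
          Finset.prod_mul_distrib
      _ = x ^ N * ∏ i ∈ Finset.range N, (1 + a i) := by
          rw [Finset.prod_const, Finset.card_range]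
  have hP : ∀ m : ℕ, (∏ i ∈ Finset.range m, (x + (i:ℝ))) * (∏ i ∈ Finset.range m, (1 + b i))
      = x ^ m := by
    intro m
    calc (∏ i ∈ Finset.range m, (x + (i:ℝ))) * (∏ i ∈ Finset.range m, (1 + b i))
        = ∏ i ∈ Finset.range m, ((x + (i:ℝ)) * (1 + b i)) := Finset.prod_mul_distrib.symm
      _ = ∏ _i ∈ Finset.range m, x := by
          refine Finset.prod_congr rfl fun i _ => ?_
          rw [hb_id]
          field_simp
      _ = x ^ m := by rw [Finset.prod_const, Finset.card_range]
  have hPpos : ∀ m : ℕ, (0:ℝ) < ∏ i ∈ Finset.range m, (x + (i:ℝ)) :=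
    fun m => Finset.prod_pos fun i _ => hxi i
  have hR1 : (∏ i ∈ Finset.range N, (x - (i:ℝ))) /
      ((∏ i ∈ Finset.range n1, (x + (i:ℝ))) * ∏ i ∈ Finset.range n2, (x + (i:ℝ)))
      = (∏ i ∈ Finset.range N, (1 + a i)) * (∏ i ∈ Finset.range n1, (1 + b i))
        * (∏ i ∈ Finset.range n2, (1 + b i)) := by
    rw [div_eq_iff (by positivity : ((∏ i ∈ Finset.range n1, (x + (i:ℝ))) *
      ∏ i ∈ Finset.range n2, (x + (i:ℝ))) ≠ 0), hQ, ← hsum, pow_add]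
    calc x ^ n1 * x ^ n2 * ∏ i ∈ Finset.range (n1 + n2), (1 + a i)
        = ((∏ i ∈ Finset.range n1, (x + (i:ℝ))) * (∏ i ∈ Finset.range n1, (1 + b i)))
          * ((∏ i ∈ Finset.range n2, (x + (i:ℝ))) * (∏ i ∈ Finset.range n2, (1 + b i)))
          * ∏ i ∈ Finset.range (n1 + n2), (1 + a i) := by rw [hP n1, hP n2]
      _ = (∏ i ∈ Finset.range (n1 + n2), (1 + a i)) * (∏ i ∈ Finset.range n1, (1 + b i))
          * (∏ i ∈ Finset.range n2, (1 + b i))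
          * ((∏ i ∈ Finset.range n1, (x + (i:ℝ))) * ∏ i ∈ Finset.range n2, (x + (i:ℝ))) := by
          ring
  have hR2 : (∏ i ∈ Finset.range N, (x - (i:ℝ))) / (∏ i ∈ Finset.range N, (x + (i:ℝ)))
      = (∏ i ∈ Finset.range N, (1 + a i)) * (∏ i ∈ Finset.range N, (1 + b i)) := by
    rw [div_eq_iff (ne_of_gt (hPpos N)), hQ]
    calc x ^ N * ∏ i ∈ Finset.range N, (1 + a i)
        = ((∏ i ∈ Finset.range N, (x + (i:ℝ))) * (∏ i ∈ Finset.range N, (1 + b i)))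
          * ∏ i ∈ Finset.range N, (1 + a i) := by rw [hP N]
      _ = (∏ i ∈ Finset.range N, (1 + a i)) * (∏ i ∈ Finset.range N, (1 + b i))
          * ∏ i ∈ Finset.range N, (x + (i:ℝ)) := by ring
  rw [hR1, hR2]
  -- sigma estimate
  have hab : ∀ i : ℕ, b i - a i = (i:ℝ)^2/(x*(x+i)) := by
    intro i
    rw [hadef, hbdef]
    have h1 : x ≠ 0 := ne_of_gt hx
    have h2 : x + (i:ℝ) ≠ 0 := ne_of_gt (hxi i)
    field_simp
    ring
  have habbd : ∀ i : ℕ, i < N → |b i - a i| ≤ (N:ℝ)^2/x^2 := by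
    intro i hi
    rw [hab i, abs_of_nonneg (by positivity)]
    have hiN : (i:ℝ) ≤ (N:ℝ) := by exact_mod_cast hi.le
    have hix : (0:ℝ) ≤ (i:ℝ) := by positivity
    rw [div_le_div_iff₀ (by positivity) (by positivity)]
    have hxxi : x^2 ≤ x*(x+i) := by nlinarith [hxi i]
    have hi2 : (i:ℝ)^2 ≤ (N:ℝ)^2 := by nlinarith
    nlinarith [mul_le_mul hi2 hxxi (by positivity : (0:ℝ) ≤ x^2) (by positivity : (0:ℝ) ≤ (N:ℝ)^2)]
  have hsum_ab : ∀ m : ℕ, m ≤ N → |∑ i ∈ Finset.range m, (b i - a i)| ≤ (N:ℝ)^3/x^2 := by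
    intro m hm
    calc |∑ i ∈ Finset.range m, (b i - a i)| ≤ ∑ i ∈ Finset.range m, |b i - a i| :=
          Finset.abs_sum_le_sum_abs _ _
      _ ≤ ∑ _i ∈ Finset.range m, (N:ℝ)^2/x^2 :=
          Finset.sum_le_sum fun i hi => habbd i (lt_of_lt_of_le (Finset.mem_range.1 hi) hm)
      _ = (m:ℝ) * ((N:ℝ)^2/x^2) := by rw [Finset.sum_const, Finset.card_range, nsmul_eq_mul]
      _ ≤ (N:ℝ) * ((N:ℝ)^2/x^2) := by
          have h1 : (m : ℝ) ≤ (N : ℝ) := by exact_mod_cast hm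
          have hp : (0:ℝ) ≤ (N : ℝ)^2 / x^2 := by positivity
          nlinarith
      _ = (N:ℝ)^3/x^2 := by ring
  have ha_lin : (∑ i ∈ Finset.range n1, a i) + (∑ i ∈ Finset.range n2, a i)
      - (∑ i ∈ Finset.range N, a i) = (n1 * n2 : ℝ)/x := by
    have hcast : (∑ i ∈ Finset.range N, (i:ℝ))
        = (∑ i ∈ Finset.range n1, (i:ℝ)) + (∑ i ∈ Finset.range n2, (i:ℝ)) + (n1:ℝ) * n2 := by
      rw [← hsum]
      have hh := congrArg (Nat.cast : ℕ → ℝ) (sum_range_split n1 n2)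
      push_cast at hh
      exact hh
    have hform : ∀ m : ℕ, (∑ i ∈ Finset.range m, a i) = -(∑ i ∈ Finset.range m, (i:ℝ))/x := by
      intro m
      simp only [hadef, neg_div, Finset.sum_neg_distrib, ← Finset.sum_div]
    rw [hform, hform, hform, hcast]
    field_simp
    ring
  have hsig : |(∑ i ∈ Finset.range n1, b i) + (∑ i ∈ Finset.range n2, b i)
      - (∑ i ∈ Finset.range N, b i) - (n1 * n2 : ℝ) / x| ≤ 3 * ((N:ℝ)^4/x^2) := by
    have key : (∑ i ∈ Finset.range n1, b i) + (∑ i ∈ Finset.range n2, b i)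
        - (∑ i ∈ Finset.range N, b i) - (n1 * n2 : ℝ) / x
        = (∑ i ∈ Finset.range n1, (b i - a i)) + (∑ i ∈ Finset.range n2, (b i - a i))
          - (∑ i ∈ Finset.range N, (b i - a i)) := by
      rw [← ha_lin, Finset.sum_sub_distrib, Finset.sum_sub_distrib, Finset.sum_sub_distrib]
      ring
    rw [key]
    have h1 := hsum_ab n1 hn1N
    have h2 := hsum_ab n2 hn2N
    have h3 := hsum_ab N le_rfl
    have hN3 : (N:ℝ)^3/x^2 ≤ (N:ℝ)^4/x^2 := by
      apply div_le_div₀ (by positivity) (by nlinarith) (by positivity) le_rfl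
    have htr1 := abs_add_le ((∑ i ∈ Finset.range n1, (b i - a i))
      + (∑ i ∈ Finset.range n2, (b i - a i))) (-(∑ i ∈ Finset.range N, (b i - a i)))
    have htr2 := abs_add_le (∑ i ∈ Finset.range n1, (b i - a i))
      (∑ i ∈ Finset.range n2, (b i - a i))
    rw [abs_neg] at htr1
    have : (∑ i ∈ Finset.range n1, (b i - a i)) + (∑ i ∈ Finset.range n2, (b i - a i))
        - (∑ i ∈ Finset.range N, (b i - a i))
        = (∑ i ∈ Finset.range n1, (b i - a i)) + (∑ i ∈ Finset.range n2, (b i - a i))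
          + -(∑ i ∈ Finset.range N, (b i - a i)) := by ring
    rw [this]
    linarith
  -- final combination
  have hsq : ((N:ℝ)^2/x)^2 = (N:ℝ)^4/x^2 := by
    rw [div_pow, ← pow_mul]
  have hgoal : 25 * (N : ℝ) ^ 4 / x ^ 2 = 25 * ((N:ℝ)^4/x^2) := by ring
  rw [hgoal]
  apply final_combine _ _ _ _ _ _ _ _ ((N:ℝ)^2/x) ((N:ℝ)^4/x^2)
    (by positivity) hquarter hsq
  · exact hA1.trans (by linarith [hsum_a N le_rfl])
  · exact hB11.trans (by linarith [hsum_b n1 hn1N])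
  · exact hB21.trans (by linarith [hsum_b n2 hn2N])
  · exact hBN1.trans (by linarith [hsum_b N le_rfl])
  · refine hB12.trans ?_
    rw [← hsq]
    exact pow_le_pow_left₀ (Finset.sum_nonneg fun i _ => abs_nonneg _) (hsum_b n1 hn1N) 2
  · refine hB22.trans ?_
    rw [← hsq]
    exact pow_le_pow_left₀ (Finset.sum_nonneg fun i _ => abs_nonneg _) (hsum_b n2 hn2N) 2
  · refine hBN2.trans ?_
    rw [← hsq]
    exact pow_le_pow_left₀ (Finset.sum_nonneg fun i _ => abs_nonneg _) (hsum_b N le_rfl) 2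
  · exact hsig

section bridge

variable (N n1 n2 d : ℕ)

lemma fact_split (hn1 : 1 ≤ n1) (hn2 : 1 ≤ n2) (hsum : n1 + n2 = N) :
    ((N.choose n1 : ℕ) : ℝ) * (n1.factorial : ℝ) * (n2.factorial : ℝ) = (N.factorial : ℝ) := by
  have h := Nat.choose_mul_factorial_mul_factorial (by omega : n1 ≤ N)
  have h2 : N - n1 = n2 := by omega
  rw [h2] at h
  exact_mod_cast h

lemma prod_split (hsum : n1 + n2 = N) :
    (∏ i ∈ Finset.range N, ((d : ℝ) + i))
      = (∏ i ∈ Finset.range n1, ((d : ℝ) + i)) * ∏ i ∈ Finset.range n2, ((d : ℝ) + (n1 + i)) := by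
  rw [← hsum, Finset.prod_range_add]
  congr 1
  refine Finset.prod_congr rfl fun i _ => ?_
  push_cast
  ring

lemma PN_ge (hsum : n1 + n2 = N) (hd : 1 ≤ d) :
    (∏ i ∈ Finset.range n1, ((d : ℝ) + i)) * (∏ i ∈ Finset.range n2, ((d : ℝ) + i))
      ≤ ∏ i ∈ Finset.range N, ((d : ℝ) + i) := by
  rw [prod_split N n1 n2 d hsum]
  have hd0 : (0:ℝ) < d := by exact_mod_cast hd
  apply mul_le_mul_of_nonneg_left ?_ (le_of_lt (Finset.prod_pos fun i _ => by positivity))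
  apply Finset.prod_le_prod (fun i _ => by positivity) fun i _ => by
    have : (0:ℝ) ≤ (n1:ℝ) := by positivity
    push_cast
    linarith

/-- A1 : the good-λ sign condition. -/
lemma ineqA1 (hn1 : 1 ≤ n1) (hn2 : 1 ≤ n2) (hsum : n1 + n2 = N) (hd : 1 ≤ d) :
    1 / (((N + d - 1).choose (d - 1) : ℕ) : ℝ)
      ≤ ((N.choose n1 : ℕ) : ℝ) /
        ((((n1 + d - 1).choose (d - 1) : ℕ) : ℝ) * (((n2 + d - 1).choose (d - 1) : ℕ) : ℝ)) := by
  rw [cast_choose_asc d N hd, cast_choose_asc d n1 hd, cast_choose_asc d n2 hd]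
  have hd0 : (0:ℝ) < d := by exact_mod_cast hd
  have hPpos : ∀ m : ℕ, (0:ℝ) < ∏ i ∈ Finset.range m, ((d:ℝ) + i) :=
    fun m => Finset.prod_pos fun i _ => by positivity
  have hcpos : (0:ℝ) < ((N.choose n1 : ℕ) : ℝ) := by
    exact_mod_cast Nat.choose_pos (by omega : n1 ≤ N)
  have hfs := fact_split N n1 n2 hn1 hn2 hsum
  have hge := PN_ge N n1 n2 d hsum hd
  have hf1 : (0:ℝ) < (n1.factorial : ℝ) := by exact_mod_cast n1.factorial_pos
  have hf2 : (0:ℝ) < (n2.factorial : ℝ) := by exact_mod_cast n2.factorial_pos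
  have hfN : (0:ℝ) < (N.factorial : ℝ) := by exact_mod_cast N.factorial_pos
  rw [div_le_div_iff₀ (by positivity) (by positivity)]
  have key : ((N.choose n1 : ℕ) : ℝ) * (∏ i ∈ Finset.range N, ((d:ℝ) + i))
      * ((n1.factorial : ℝ) * (n2.factorial : ℝ))
      ≥ (∏ i ∈ Finset.range n1, ((d:ℝ) + i)) * (∏ i ∈ Finset.range n2, ((d:ℝ) + i))
        * (N.factorial : ℝ) := by
    rw [← hfs]
    have h0 : (0:ℝ) ≤ ((N.choose n1 : ℕ) : ℝ) * ((n1.factorial : ℝ) * (n2.factorial : ℝ)) := by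
      positivity
    nlinarith [hge, hPpos N, hPpos n1, hPpos n2]
  calc 1 * ((∏ i ∈ Finset.range n1, ((d:ℝ) + i)) / (n1.factorial : ℝ)
        * ((∏ i ∈ Finset.range n2, ((d:ℝ) + i)) / (n2.factorial : ℝ)))
      = (∏ i ∈ Finset.range n1, ((d:ℝ) + i)) * (∏ i ∈ Finset.range n2, ((d:ℝ) + i))
        * (N.factorial : ℝ) / ((n1.factorial : ℝ) * (n2.factorial : ℝ) * (N.factorial : ℝ)) := by
        field_simp
    _ ≤ ((N.choose n1 : ℕ) : ℝ) * (∏ i ∈ Finset.range N, ((d:ℝ) + i))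
        * ((n1.factorial : ℝ) * (n2.factorial : ℝ))
          / ((n1.factorial : ℝ) * (n2.factorial : ℝ) * (N.factorial : ℝ)) := by
        apply div_le_div_of_nonneg_right ?x ?y |>.trans le_rfl
        case x => exact key
        case y => positivity
    _ = ((N.choose n1 : ℕ) : ℝ) * ((∏ i ∈ Finset.range N, ((d:ℝ) + i)) / (N.factorial : ℝ)) := by
        field_simp
end bridge

section A2
variable (N n1 n2 d : ℕ)

lemma ineqA2 (L : ℕ) (hL : L + 1 ≤ N.choose n1) (hn1 : 1 ≤ n1) (hn2 : 1 ≤ n2)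
    (hsum : n1 + n2 = N)
    (hd : 4 * N ^ 4 + 2 * N ^ 2 * (N.choose n1) + N + 4 ≤ d) :
    (L : ℝ) / ((((n1 + d - 1).choose (d - 1) : ℕ) : ℝ) * (((n2 + d - 1).choose (d - 1) : ℕ) : ℝ))
      ≤ 1 / (((N + d - 1).choose (d - 1) : ℕ) : ℝ) := by
  have hN : 1 ≤ N := by omega
  have hd1 : 1 ≤ d := by omega
  rw [cast_choose_asc d N hd1, cast_choose_asc d n1 hd1, cast_choose_asc d n2 hd1]
  have hd0 : (0:ℝ) < d := by exact_mod_cast hd1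
  have hxi : ∀ i : ℕ, (0:ℝ) < (d:ℝ) + i := fun i => by positivity
  have hPpos : ∀ m : ℕ, (0:ℝ) < ∏ i ∈ Finset.range m, ((d:ℝ) + i) :=
    fun m => Finset.prod_pos fun i _ => hxi i
  have hf1 : (0:ℝ) < (n1.factorial : ℝ) := by exact_mod_cast n1.factorial_pos
  have hf2 : (0:ℝ) < (n2.factorial : ℝ) := by exact_mod_cast n2.factorial_pos
  have hfN : (0:ℝ) < (N.factorial : ℝ) := by exact_mod_cast N.factorial_pos
  have hfs := fact_split N n1 n2 hn1 hn2 hsum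
  set c : ℝ := ((N.choose n1 : ℕ) : ℝ) with hcdef
  have hc1 : (1:ℝ) ≤ c := by
    rw [hcdef]; exact_mod_cast Nat.choose_pos (by omega : n1 ≤ N)
  have hLc : (L:ℝ) ≤ c - 1 := by
    rw [hcdef]
    have : (L:ℝ) + 1 ≤ ((N.choose n1 : ℕ) : ℝ) := by exact_mod_cast hL
    linarith
  -- the key product inequality
  have hbig : 2 * (N:ℝ)^2 * c + 2 ≤ (d:ℝ) := by
    have : ((4 * N ^ 4 + 2 * N ^ 2 * (N.choose n1) + N + 4 : ℕ) : ℝ) ≤ (d:ℝ) :=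
      Nat.cast_le.2 hd
    push_cast at this
    have hN4 : (0:ℝ) ≤ (N:ℝ)^4 := by positivity
    nlinarith
  have hkey : (L:ℝ) * (∏ i ∈ Finset.range n2, ((d:ℝ) + (n1 + i)))
      ≤ c * ∏ i ∈ Finset.range n2, ((d:ℝ) + i) := by
    set g : ℕ → ℝ := fun i => (n1:ℝ) / ((d:ℝ) + i) with hgdef
    have hg0 : ∀ i, 0 ≤ g i := fun i => by rw [hgdef]; positivity
    have hgsum : ∑ i ∈ Finset.range n2, |g i| ≤ (N:ℝ)^2 / d := by
      calc ∑ i ∈ Finset.range n2, |g i| ≤ ∑ _i ∈ Finset.range n2, (N:ℝ)/d := by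
            refine Finset.sum_le_sum fun i _ => ?_
            rw [abs_of_nonneg (hg0 i), hgdef]
            apply div_le_div₀ (by positivity) (by exact_mod_cast Nat.le_of_lt_succ (by omega)) hd0
              (by linarith [hxi i, (by positivity : (0:ℝ) ≤ (i:ℝ))])
        _ = (n2:ℝ) * ((N:ℝ)/d) := by rw [Finset.sum_const, Finset.card_range, nsmul_eq_mul]
        _ ≤ (N:ℝ) * ((N:ℝ)/d) := by
            have h1 : (n2:ℝ) ≤ (N:ℝ) := by exact_mod_cast (by omega : n2 ≤ N)
            have hp : (0:ℝ) ≤ (N:ℝ)/d := by positivity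
            nlinarith
        _ = (N:ℝ)^2/d := by ring
    have hN2d : (N:ℝ)^2/d ≤ 1/2 := by
      rw [div_le_iff₀ hd0]
      nlinarith
    obtain ⟨hG1, -⟩ := prod_one_add_est (Finset.range n2) g (hgsum.trans hN2d)
    have hGle : ∏ i ∈ Finset.range n2, (1 + g i) ≤ 1 + 2 * ((N:ℝ)^2/d) := by
      have := abs_le.1 hG1
      linarith [hgsum]
    have hsplitg : ∏ i ∈ Finset.range n2, ((d:ℝ) + (n1 + i))
        = (∏ i ∈ Finset.range n2, ((d:ℝ) + i)) * ∏ i ∈ Finset.range n2, (1 + g i) := by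
      rw [← Finset.prod_mul_distrib]
      refine Finset.prod_congr rfl fun i _ => ?_
      rw [hgdef]
      field_simp
      ring
    rw [hsplitg]
    have hL0 : (0:ℝ) ≤ (L:ℝ) := by positivity
    calc (L:ℝ) * ((∏ i ∈ Finset.range n2, ((d:ℝ) + i)) * ∏ i ∈ Finset.range n2, (1 + g i))
        ≤ (c - 1) * ((∏ i ∈ Finset.range n2, ((d:ℝ) + i)) * (1 + 2 * ((N:ℝ)^2/d))) := by
          have hGpos : (0:ℝ) ≤ ∏ i ∈ Finset.range n2, (1 + g i) :=
            le_of_lt (Finset.prod_pos fun i _ => by have := hg0 i; linarith)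
          have hPp := hPpos n2
          nlinarith [mul_le_mul_of_nonneg_left hGle (le_of_lt (hPpos n2)),
            mul_le_mul_of_nonneg_right hLc
              (mul_nonneg (le_of_lt (hPpos n2)) hGpos)]
      _ ≤ c * ∏ i ∈ Finset.range n2, ((d:ℝ) + i) := by
          have h2 : (c - 1) * (1 + 2 * ((N:ℝ)^2/d)) ≤ c := by
            rw [← sub_nonneg]
            have expand : c - (c - 1) * (1 + 2 * ((N:ℝ)^2/d))
                = (( (d:ℝ) - 2*(N:ℝ)^2*c + 2*(N:ℝ)^2) ) / d := by
              field_simp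
              ring
            rw [expand]
            apply div_nonneg ?_ (le_of_lt hd0)
            nlinarith [(by positivity : (0:ℝ) ≤ (N:ℝ)^2)]
          calc (c - 1) * ((∏ i ∈ Finset.range n2, ((d:ℝ) + i)) * (1 + 2 * ((N:ℝ)^2/d)))
              = ((c - 1) * (1 + 2 * ((N:ℝ)^2/d))) * ∏ i ∈ Finset.range n2, ((d:ℝ) + i) := by
                ring
            _ ≤ c * ∏ i ∈ Finset.range n2, ((d:ℝ) + i) :=
                mul_le_mul_of_nonneg_right h2 (le_of_lt (hPpos n2))
  -- now conclude by cross multiplication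
  rw [div_le_div_iff₀ (by positivity) (by positivity)]
  have hPN : (∏ i ∈ Finset.range N, ((d:ℝ) + i))
      = (∏ i ∈ Finset.range n1, ((d:ℝ) + i)) * ∏ i ∈ Finset.range n2, ((d:ℝ) + (n1 + i)) :=
    prod_split N n1 n2 d hsum
  have hmul := mul_le_mul_of_nonneg_left hkey (le_of_lt (hPpos n1))
  calc (L:ℝ) * ((∏ i ∈ Finset.range N, ((d:ℝ) + i)) / (N.factorial : ℝ))
      = ((L:ℝ) * ((∏ i ∈ Finset.range n1, ((d:ℝ) + i))
          * ∏ i ∈ Finset.range n2, ((d:ℝ) + (n1 + i)))) / (N.factorial : ℝ) := by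
        rw [hPN]; ring
    _ ≤ (((∏ i ∈ Finset.range n1, ((d:ℝ) + i)) * (c * ∏ i ∈ Finset.range n2, ((d:ℝ) + i))))
          / (N.factorial : ℝ) := by
        apply div_le_div_of_nonneg_right ?x2 ?y2 |>.trans le_rfl
        case x2 => nlinarith [hmul]
        case y2 => exact hfN.le
    _ = 1 * ((∏ i ∈ Finset.range n1, ((d:ℝ) + i)) / (n1.factorial : ℝ)
          * ((∏ i ∈ Finset.range n2, ((d:ℝ) + i)) / (n2.factorial : ℝ))) := by
        rw [← hfs]
        field_simp
end A2

lemma abs_split (p q : ℝ) : |p - q| = (p - q) + 2 * max (q - p) 0 := by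
  rcases le_total q p with h | h
  · rw [abs_of_nonneg (by linarith), max_eq_right (by linarith)]
    ring
  · rw [abs_of_nonpos (by linarith), max_eq_left (by linarith)]
    ring

lemma tvd_eq (N n1 n2 d : ℕ) (hn1 : 1 ≤ n1) (hn2 : 1 ≤ n2) (hsum : n1 + n2 = N)
    (hd : 4 * N ^ 4 + 2 * N ^ 2 * (N.choose n1) + N + 4 ≤ d) :
    TVDagg d n1 n2 = ((d.choose N : ℕ) : ℝ) *
      (((N.choose n1 : ℕ) : ℝ) /
          ((((n1 + d - 1).choose (d - 1) : ℕ) : ℝ) * (((n2 + d - 1).choose (d - 1) : ℕ) : ℝ))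
        - 1 / (((N + d - 1).choose (d - 1) : ℕ) : ℝ)) := by
  have hd1 : 1 ≤ d := by omega
  set rM : ℝ := (((N + d - 1).choose (d - 1) : ℕ) : ℝ) with hrM
  set rM1 : ℝ := (((n1 + d - 1).choose (d - 1) : ℕ) : ℝ) with hrM1
  set rM2 : ℝ := (((n2 + d - 1).choose (d - 1) : ℕ) : ℝ) with hrM2
  have hrMpos : (0:ℝ) < rM := by
    rw [hrM]; exact_mod_cast Nat.choose_pos (by omega : d - 1 ≤ N + d - 1)
  have hrM1pos : (0:ℝ) < rM1 := by
    rw [hrM1]; exact_mod_cast Nat.choose_pos (by omega : d - 1 ≤ n1 + d - 1)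
  have hrM2pos : (0:ℝ) < rM2 := by
    rw [hrM2]; exact_mod_cast Nat.choose_pos (by omega : d - 1 ≤ n2 + d - 1)
  set K := Finset.Nat.antidiagonalTuple d N with hK
  set q : (Fin d → ℕ) → ℝ := fun lam => (Lfun lam n1 : ℝ) / (rM1 * rM2) with hq
  have htv : TVDagg d n1 n2 = (1/2) * ∑ lam ∈ K, |1/rM - q lam| := by
    rw [TVDagg, hsum, hK, hq, hrM, hrM1, hrM2]
  -- sum of p's is 1
  have hsum_p : ∑ _lam ∈ K, (1/rM) = 1 := by
    rw [Finset.sum_const, hK, card_adt d N hd1, nsmul_eq_mul]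
    rw [← hrM]
    field_simp
  -- sum of q's is 1
  have hsum_q : ∑ lam ∈ K, q lam = 1 := by
    rw [hq]
    simp only
    rw [← Finset.sum_div, ← Nat.cast_sum, sum_Lfun N n1 n2 hsum,
      card_adt d n1 hd1, card_adt d n2 hd1]
    push_cast
    rw [← hrM1, ← hrM2]
    field_simp
  -- rewrite with abs_split
  have step1 : ∑ lam ∈ K, |1/rM - q lam|
      = ∑ lam ∈ K, ((1/rM - q lam) + 2 * max (q lam - 1/rM) 0) :=
    Finset.sum_congr rfl fun lam _ => abs_split _ _
  have step2 : ∑ lam ∈ K, ((1/rM - q lam) + 2 * max (q lam - 1/rM) 0)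
      = (∑ lam ∈ K, (1/rM - q lam)) + 2 * ∑ lam ∈ K, max (q lam - 1/rM) 0 := by
    rw [Finset.sum_add_distrib, Finset.mul_sum]
  have step3 : ∑ lam ∈ K, (1/rM - q lam) = 0 := by
    rw [Finset.sum_sub_distrib, hsum_p, hsum_q]
    ring
  -- split the max sum over good/bad
  have step4 : ∑ lam ∈ K, max (q lam - 1/rM) 0
      = ∑ lam ∈ K.filter (fun lam => ∀ j, lam j ≤ 1), max (q lam - 1/rM) 0
        + ∑ lam ∈ K.filter (fun lam => ¬ ∀ j, lam j ≤ 1), max (q lam - 1/rM) 0 :=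
    (Finset.sum_filter_add_sum_filter_not K _ _).symm
  have hgoodval : ∀ lam ∈ K.filter (fun lam => ∀ j, lam j ≤ 1),
      max (q lam - 1/rM) 0 = ((N.choose n1 : ℕ) : ℝ) / (rM1 * rM2) - 1/rM := by
    intro lam hlam
    rw [Finset.mem_filter] at hlam
    have hLf : Lfun lam n1 = N.choose n1 := Lfun_eq hlam.1 hlam.2
    have hqv : q lam = ((N.choose n1 : ℕ) : ℝ) / (rM1 * rM2) := by
      rw [hq]; simp only; rw [hLf]
    rw [hqv, max_eq_left]
    rw [sub_nonneg, hrM, hrM1, hrM2]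
    exact ineqA1 N n1 n2 d hn1 hn2 hsum hd1
  have hbadval : ∀ lam ∈ K.filter (fun lam => ¬ ∀ j, lam j ≤ 1),
      max (q lam - 1/rM) 0 = 0 := by
    intro lam hlam
    rw [Finset.mem_filter] at hlam
    obtain ⟨hlamK, hbad⟩ := hlam
    push_neg at hbad
    obtain ⟨j0, hj0⟩ := hbad
    have hLf := Lfun_lt hn1 hn2 hsum hlamK j0 (by omega)
    rw [max_eq_right]
    rw [sub_nonpos, hq]
    simp only
    rw [hrM, hrM1, hrM2]
    exact ineqA2 N n1 n2 d (Lfun lam n1) hLf hn1 hn2 hsum hd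
  have step5 : ∑ lam ∈ K.filter (fun lam => ∀ j, lam j ≤ 1), max (q lam - 1/rM) 0
      = ((d.choose N : ℕ) : ℝ) * (((N.choose n1 : ℕ) : ℝ) / (rM1 * rM2) - 1/rM) := by
    rw [Finset.sum_congr rfl hgoodval, Finset.sum_const, hK, card_good N, nsmul_eq_mul]
  have step6 : ∑ lam ∈ K.filter (fun lam => ¬ ∀ j, lam j ≤ 1), max (q lam - 1/rM) 0 = 0 :=
    Finset.sum_eq_zero hbadval
  rw [htv, step1, step2, step3, step4, step5, step6]
  ring

lemma est (N n1 n2 d : ℕ) (hn1 : 1 ≤ n1) (hn2 : 1 ≤ n2) (hsum : n1 + n2 = N)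
    (hd : 4 * N ^ 4 + N + 4 ≤ d) :
    |((d.choose N : ℕ) : ℝ) *
      (((N.choose n1 : ℕ) : ℝ) /
          ((((n1 + d - 1).choose (d - 1) : ℕ) : ℝ) * (((n2 + d - 1).choose (d - 1) : ℕ) : ℝ))
        - 1 / (((N + d - 1).choose (d - 1) : ℕ) : ℝ)) - (n1 * n2 : ℝ) / d|
      ≤ 25 * (N : ℝ) ^ 4 / d ^ 2 := by
  have hN : 1 ≤ N := by omega
  have hd1 : 1 ≤ d := by omega
  have hNd : N ≤ d := by nlinarith [sq_nonneg N]
  have hd0 : (0:ℝ) < d := by exact_mod_cast hd1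
  have hPpos : ∀ m : ℕ, (0:ℝ) < ∏ i ∈ Finset.range m, ((d:ℝ) + i) :=
    fun m => Finset.prod_pos fun i _ => by positivity
  have hf1 : (0:ℝ) < (n1.factorial : ℝ) := by exact_mod_cast n1.factorial_pos
  have hf2 : (0:ℝ) < (n2.factorial : ℝ) := by exact_mod_cast n2.factorial_pos
  have hfN : (0:ℝ) < (N.factorial : ℝ) := by exact_mod_cast N.factorial_pos
  have hfs := fact_split N n1 n2 hn1 hn2 hsum
  rw [cast_choose_desc d N hNd, cast_choose_asc d N hd1, cast_choose_asc d n1 hd1,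
    cast_choose_asc d n2 hd1]
  have key : ((∏ i ∈ Finset.range N, ((d : ℝ) - i)) / N.factorial) *
      (((N.choose n1 : ℕ) : ℝ) /
          ((∏ i ∈ Finset.range n1, ((d : ℝ) + i)) / n1.factorial *
            ((∏ i ∈ Finset.range n2, ((d : ℝ) + i)) / n2.factorial))
        - 1 / ((∏ i ∈ Finset.range N, ((d : ℝ) + i)) / N.factorial))
      = (∏ i ∈ Finset.range N, ((d : ℝ) - i)) /
          ((∏ i ∈ Finset.range n1, ((d : ℝ) + i)) * ∏ i ∈ Finset.range n2, ((d : ℝ) + i))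
        - (∏ i ∈ Finset.range N, ((d : ℝ) - i)) / (∏ i ∈ Finset.range N, ((d : ℝ) + i)) := by
    have e1 : ((N.choose n1 : ℕ) : ℝ) /
        ((∏ i ∈ Finset.range n1, ((d : ℝ) + i)) / n1.factorial *
          ((∏ i ∈ Finset.range n2, ((d : ℝ) + i)) / n2.factorial))
        = (N.factorial : ℝ) /
          ((∏ i ∈ Finset.range n1, ((d : ℝ) + i)) * ∏ i ∈ Finset.range n2, ((d : ℝ) + i)) := by
      rw [div_eq_div_iff (by positivity) (by positivity), ← hfs]
      field_simp
    have e2 : 1 / ((∏ i ∈ Finset.range N, ((d : ℝ) + i)) / N.factorial)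
        = (N.factorial : ℝ) / (∏ i ∈ Finset.range N, ((d : ℝ) + i)) := one_div_div _ _
    rw [e1, e2]
    field_simp
  rw [key]
  exact est_core N n1 n2 d hn1 hn2 hsum hd

lemma Lfun_zero {d : ℕ} (lam : Fin d → ℕ) : Lfun lam 0 = 1 := by
  rw [Lfun, Finset.Nat.antidiagonalTuple_zero_right, Finset.filter_singleton]
  rw [if_pos fun j => by simp]
  exact Finset.card_singleton _

lemma Lfun_full {d n1 : ℕ} {lam : Fin d → ℕ}
    (hlam : lam ∈ Finset.Nat.antidiagonalTuple d n1) : Lfun lam n1 = 1 := by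
  rw [Lfun, Finset.card_eq_one]
  refine ⟨lam, ?_⟩
  ext a
  simp only [Finset.mem_filter, Finset.mem_singleton]
  constructor
  · rintro ⟨haK, hle⟩
    funext j
    by_contra hne
    have hlt : a j < lam j := lt_of_le_of_ne (hle j) hne
    have hslt : ∑ i, a i < ∑ i, lam i :=
      Finset.sum_lt_sum (fun i _ => hle i) ⟨j, Finset.mem_univ j, hlt⟩
    rw [Finset.Nat.mem_antidiagonalTuple] at haK hlam
    omega
  · rintro rfl
    exact ⟨hlam, fun j => le_rfl⟩

lemma tvd_zero_left (d n2 : ℕ) : TVDagg d 0 n2 = 0 := by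
  rw [TVDagg]
  rw [Finset.sum_eq_zero, mul_zero]
  intro lam _
  rw [Lfun_zero lam]
  have h1 : (0 + d - 1).choose (d - 1) = 1 := by
    rw [Nat.zero_add]
    exact Nat.choose_self _
  rw [h1]
  simp [Nat.zero_add]

lemma tvd_zero_right (d n1 : ℕ) : TVDagg d n1 0 = 0 := by
  rw [TVDagg]
  rw [Finset.sum_eq_zero, mul_zero]
  intro lam hlam
  rw [Nat.add_zero] at hlam
  rw [Lfun_full hlam]
  have h1 : (0 + d - 1).choose (d - 1) = 1 := by
    rw [Nat.zero_add]
    exact Nat.choose_self _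
  rw [h1]
  simp [Nat.add_zero]

theorem stmt0 (N n1 n2 : ℕ) (hN : 1 ≤ N) (hsum : n1 + n2 = N) :
    ∃ C : ℝ, 0 < C ∧ ∃ D : ℕ, ∀ d : ℕ, D ≤ d →
      |TVDagg d n1 n2 - (n1 * n2 : ℝ) / d| ≤ C / d ^ 2 := by
  by_cases h1 : n1 = 0
  · refine ⟨1, one_pos, 1, fun d _ => ?_⟩
    subst h1
    rw [tvd_zero_left]
    simp only [Nat.cast_zero, zero_mul, zero_div, sub_zero, abs_zero]
    positivity
  by_cases h2 : n2 = 0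
  · refine ⟨1, one_pos, 1, fun d _ => ?_⟩
    subst h2
    rw [tvd_zero_right]
    simp only [Nat.cast_zero, mul_zero, zero_div, sub_zero, abs_zero]
    positivity
  · have hn1 : 1 ≤ n1 := by omega
    have hn2 : 1 ≤ n2 := by omega
    have hN1 : (1:ℝ) ≤ (N:ℝ) := by exact_mod_cast hN
    refine ⟨25 * (N : ℝ) ^ 4, by nlinarith [pow_le_pow_left₀ zero_le_one hN1 4], 4 * N ^ 4 + 2 * N ^ 2 * (N.choose n1) + N + 4,
      fun d hd => ?_⟩
    rw [tvd_eq N n1 n2 d hn1 hn2 hsum hd]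
    exact est N n1 n2 d hn1 hn2 hsum (by omega)

end
end

section
/- Fix α ∈ (0,1). For d = 2, with n1 = ⌊αN⌋ and n2 = N − n1, the aggregate total variation distance satisfies lim_{N→∞} TVD_agg(2, n1, n2) = α(1−α). -/
open Finset Filter Topology

noncomputable section

lemma Lfun_two (lam : Fin 2 → ℕ) (n1 : ℕ) :
    Lfun lam n1 = min n1 (lam 0) + 1 - (n1 - lam 1) := by
  unfold Lfun
  rw [Finset.Nat.antidiagonalTuple_two, Finset.filter_map, Finset.card_map,
      Finset.Nat.antidiagonal_eq_map, Finset.filter_map, Finset.card_map]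
  have h : (Finset.range (n1+1)).filter
      (fun i => i ≤ lam 0 ∧ n1 - i ≤ lam 1) = Finset.Icc (n1 - lam 1) (min n1 (lam 0)) := by
    ext i; simp [Nat.lt_succ_iff]; omega
  rw [Finset.filter_congr (q := fun i => i ≤ lam 0 ∧ n1 - i ≤ lam 1) (fun i hi => by
      simp [Fin.forall_fin_two]; show i ≤ lam 0 ∧ n1 - i ≤ lam 1 ↔ _
      constructor <;> intro h' <;> omega), h, Nat.card_Icc]
lemma sum_tuple_two (N : ℕ) (g : (Fin 2 → ℕ) → ℝ) :
    ∑ lam ∈ Finset.Nat.antidiagonalTuple 2 N, g lam = ∑ i ∈ range (N+1), g ![i, N-i] := by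
  rw [Finset.Nat.antidiagonalTuple_two, Finset.sum_map, Finset.Nat.antidiagonal_eq_map,
    Finset.sum_map]
  exact Finset.sum_congr rfl fun i hi => rfl
lemma sumL (N m : ℕ) (hm : m + m ≤ N) :
    ∀ d a, m - a = d → a ≤ m →
    ∑ k ∈ Icc a (N - a), ((min k (min (N - k) m) + 1 : ℕ) : ℝ)
      = ((m:ℝ)+1) * ((N:ℝ) - m + 1) - a * (a + 1) := by
  intro d
  induction d with
  | zero =>
    intro a hd ha
    have ham : a = m := by omega
    subst ham
    have hconst : ∀ k ∈ Icc a (N - a), ((min k (min (N - k) a) + 1 : ℕ) : ℝ) = (a:ℝ) + 1 := by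
      intro k hk
      simp only [mem_Icc] at hk
      have : min k (min (N - k) a) + 1 = a + 1 := by omega
      rw [this]; push_cast; ring
    rw [Finset.sum_congr rfl hconst, Finset.sum_const, Nat.card_Icc]
    have h1 : (↑(N - a + 1 - a) : ℝ) = (N:ℝ) - 2*a + 1 := by
      have : (N - a + 1 - a : ℕ) = N - 2*a + 1 := by omega
      rw [this]
      push_cast [Nat.cast_sub (by omega : 2*a ≤ N)]
      ring
    rw [nsmul_eq_mul, h1]; ring
  | succ d ih =>
    intro a hd ha
    have hlt : a < m := by omega
    have hsplit : Icc a (N - a) = insert a (insert (N - a) (Icc (a+1) (N - (a+1)))) := by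
      ext k; simp only [mem_Icc, mem_insert]; omega
    rw [hsplit, Finset.sum_insert (by simp only [mem_insert, mem_Icc]; omega),
      Finset.sum_insert (by simp only [mem_Icc]; omega),
      ih (a+1) (by omega) (by omega)]
    have e1 : min a (min (N - a) m) + 1 = a + 1 := by omega
    have e2 : min (N - a) (min (N - (N - a)) m) + 1 = a + 1 := by omega
    rw [e1, e2]
    push_cast
    ring

lemma TVD_exact (n1 n2 q : ℕ) (hq : q = ((n1+1)*(n2+1)-1)/(n1+n2+1)) :
    TVDagg 2 n1 n2 = 1 - ((q:ℝ)*((q:ℝ)+1))/(((n1:ℝ)+1)*((n2:ℝ)+1))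
      - (((n1:ℝ)+(n2:ℝ))+1-2*(q:ℝ))/(((n1:ℝ)+(n2:ℝ))+1) := by
  set N := n1 + n2 with hN
  set m := min n1 n2 with hm
  set c := (n1+1)*(n2+1) with hc
  have hm2 : m + m ≤ N := by omega
  have hmN : m ≤ N := by omega
  have hmc : (m+1)*(N-m+1) = c := by
    rcases le_total n1 n2 with h | h
    · have h1 : m = n1 := by omega
      rw [h1]
      have h2 : N - n1 = n2 := by omega
      rw [h2]
    · have h1 : m = n2 := by omega
      rw [h1]
      have h2 : N - n2 = n1 := by omega
      rw [h2, mul_comm]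
  have hc1 : 1 ≤ c := Nat.mul_pos (Nat.succ_pos n1) (Nat.succ_pos n2)
  have hq_m : q ≤ m := by
    rw [hq]
    have h1 : c - 1 < (m+1)*(N+1) := by
      have := Nat.mul_le_mul_left (m+1) (show N - m + 1 ≤ N + 1 by omega)
      omega
    have := (Nat.div_lt_iff_lt_mul (show 0 < N+1 by omega)).mpr h1
    omega
  have hqP : q * (N+1) ≤ c - 1 := by rw [hq]; exact Nat.div_mul_le_self _ _
  have hPq : c ≤ (q+1)*(N+1) := by
    have h1 := Nat.div_add_mod (c-1) (N+1)
    have h2 := Nat.mod_lt (c-1) (show 0 < N+1 by omega)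
    rw [← hq] at h1
    have h3 : (q+1)*(N+1) = (N+1)*q + (N+1) := by ring
    omega
  -- unfold TVDagg
  have echoose : ∀ k : ℕ, ((k + 2 - 1).choose (2-1)) = k + 1 := fun k => by
    simp [Nat.choose_one_right]
  rw [TVDagg, sum_tuple_two]
  rw [echoose (n1+n2), echoose n1, echoose n2]
  set c' : ℝ := ((n1:ℝ)+1)*((n2:ℝ)+1) with hc'
  set P' : ℝ := (N:ℝ)+1 with hP'
  have hcast1 : ((n1+n2+1 : ℕ) : ℝ) = P' := by rw [hP', hN]; push_cast; ring
  have hcast2 : ((n1+1:ℕ):ℝ) * ((n2+1:ℕ):ℝ) = c' := by push_cast; ring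
  have hc'pos : (0:ℝ) < c' := by positivity
  have hP'pos : (0:ℝ) < P' := by positivity
  have hcc : (c : ℝ) = c' := by rw [hc]; push_cast; ring
  have hmcR : ((m:ℝ)+1) * ((N:ℝ) - m + 1) = c' := by
    have h := congrArg (Nat.cast : ℕ → ℝ) hmc
    rw [hcc] at h
    push_cast [Nat.cast_sub hmN] at h
    linarith
  have hLf : ∀ i ∈ range (N+1), |1/((n1+n2+1:ℕ):ℝ) -
      (Lfun ![i, N - i] n1 : ℝ)/(((n1+1:ℕ):ℝ) * ((n2+1:ℕ):ℝ))|
      = |1/P' - ((min i (min (N - i) m) + 1 : ℕ) : ℝ)/c'| := by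
    intro i hi
    simp only [mem_range, Nat.lt_succ_iff] at hi
    rw [hcast1, hcast2]
    have hval : Lfun ![i, N - i] n1 = min i (min (N - i) m) + 1 := by
      rw [Lfun_two]
      simp only [Matrix.cons_val_zero, Matrix.cons_val_one, Matrix.head_cons]
      omega
    rw [hval]
  rw [Finset.sum_congr rfl hLf]
  -- split the sum
  have hrange : range (N+1) = Icc 0 N := by ext k; simp [Nat.lt_succ_iff]
  have hT : Icc q (N - q) ⊆ Icc 0 N := fun k hk => by
    simp only [mem_Icc] at *; omega
  set f : ℕ → ℝ := fun k => ((min k (min (N - k) m) + 1 : ℕ) : ℝ) with hf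
  have habove : ∀ k ∈ Icc q (N - q), |1/P' - f k/c'| = f k/c' - 1/P' := by
    intro k hk
    simp only [mem_Icc] at hk
    rw [abs_sub_comm, abs_of_nonneg]
    rw [sub_nonneg, div_le_div_iff₀ hP'pos hc'pos, one_mul]
    have h1 : (q+1) * (N+1) ≤ (min k (min (N-k) m) + 1) * (N+1) :=
      Nat.mul_le_mul_right _ (by omega)
    have h2 : (c:ℝ) ≤ ((min k (min (N-k) m) + 1) * (N+1) : ℕ) := by
      exact_mod_cast le_trans hPq h1
    rw [hcc] at h2
    calc c' ≤ (((min k (min (N-k) m) + 1) * (N+1) : ℕ) : ℝ) := h2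
      _ = f k * P' := by rw [hf]; push_cast; ring
  have hbelow : ∀ k ∈ Icc 0 N \ Icc q (N - q), |1/P' - f k/c'| = 1/P' - f k/c' := by
    intro k hk
    simp only [Finset.mem_sdiff, mem_Icc, not_and, not_le] at hk
    rw [abs_of_nonneg]
    rw [sub_nonneg, div_le_div_iff₀ hc'pos hP'pos, one_mul]
    have h1 : (min k (min (N-k) m) + 1) * (N+1) ≤ q * (N+1) :=
      Nat.mul_le_mul_right _ (by omega)
    have h2 : (min k (min (N-k) m) + 1) * (N+1) ≤ c := by omega
    have h3 : (((min k (min (N-k) m) + 1) * (N+1) : ℕ) : ℝ) ≤ (c:ℝ) := by exact_mod_cast h2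
    rw [hcc] at h3
    calc f k * P' = (((min k (min (N-k) m) + 1) * (N+1) : ℕ) : ℝ) := by rw [hf]; push_cast; ring
      _ ≤ c' := h3
  rw [hrange, ← Finset.sum_sdiff hT, Finset.sum_congr rfl hbelow, Finset.sum_congr rfl habove]
  have hSall : ∑ k ∈ Icc 0 N, f k = c' := by
    have := sumL N m hm2 m 0 (by omega) (by omega)
    simp only [Nat.sub_zero] at this
    rw [hf, this, hmcR]; push_cast; ring
  have hST : ∑ k ∈ Icc q (N - q), f k = c' - (q:ℝ)*((q:ℝ)+1) := by
    have := sumL N m hm2 (m - q) q rfl hq_m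
    rw [hf, this, hmcR]
  have hsplit := Finset.sum_sdiff hT (f := fun k => 1/P' - f k/c')
  have hsum_sub : ∀ s : Finset ℕ, ∑ k ∈ s, (1/P' - f k/c')
      = (s.card : ℝ)/P' - (∑ k ∈ s, f k)/c' := by
    intro s
    rw [Finset.sum_sub_distrib, Finset.sum_const, Finset.sum_div, nsmul_eq_mul]
    ring
  have hcard_all : ((Icc 0 N).card : ℝ) = P' := by
    rw [Nat.card_Icc]; push_cast; ring
  have hcard_T : ((Icc q (N-q)).card : ℝ) = (N:ℝ) - 2*q + 1 := by
    rw [Nat.card_Icc]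
    have : (N - q + 1 - q : ℕ) = N - 2*q + 1 := by omega
    rw [this]
    push_cast [Nat.cast_sub (show 2*q ≤ N by omega)]
    ring
  have hsdiff : ∑ k ∈ Icc 0 N \ Icc q (N - q), (1/P' - f k/c')
      = (∑ k ∈ Icc 0 N, (1/P' - f k/c')) - ∑ k ∈ Icc q (N - q), (1/P' - f k/c') := by
    linarith [hsplit]
  have hsum_sub2 : ∑ k ∈ Icc q (N - q), (f k/c' - 1/P')
      = (∑ k ∈ Icc q (N - q), f k)/c' - ((Icc q (N-q)).card : ℝ)/P' := by
    rw [Finset.sum_sub_distrib, Finset.sum_const, Finset.sum_div, nsmul_eq_mul]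
    ring
  rw [hsdiff, hsum_sub, hsum_sub, hsum_sub2, hSall, hST, hcard_all, hcard_T]
  have hNR : ((n1:ℝ) + (n2:ℝ)) = (N:ℝ) := by rw [hN]; push_cast; ring
  rw [hNR]
  have h1 : c' ≠ 0 := ne_of_gt hc'pos
  have h2 : P' ≠ 0 := ne_of_gt hP'pos
  have h3 : (N:ℝ) + 1 = P' := hP'.symm
  rw [h3]
  field_simp
  ring


def nn1 (α : ℝ) (N : ℕ) : ℕ := ⌊α * N⌋₊
def nn2 (α : ℝ) (N : ℕ) : ℕ := N - nn1 α N
def qfun (α : ℝ) (N : ℕ) : ℕ := ((nn1 α N + 1) * (nn2 α N + 1) - 1) / (N + 1)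

theorem stmt4 (α : ℝ) (hα : α ∈ Set.Ioo (0 : ℝ) 1) :
    Tendsto (fun N : ℕ => TVDagg 2 ⌊α * N⌋₊ (N - ⌊α * N⌋₊)) atTop
      (nhds (α * (1 - α))) := by
  obtain ⟨hα0, hα1⟩ := hα
  set τ : ℝ := α * (1 - α) with hτdef
  have hτpos : 0 < τ := by nlinarith
  have hle : ∀ N, nn1 α N ≤ N := by
    intro N
    have h1 : α * N ≤ (N:ℝ) := mul_le_of_le_one_left (Nat.cast_nonneg N) hα1.le
    calc nn1 α N ≤ ⌊(N:ℝ)⌋₊ := Nat.floor_le_floor h1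
      _ = N := Nat.floor_natCast N
  have hsum : ∀ N, nn1 α N + nn2 α N = N := by
    intro N; have := hle N; simp only [nn2]; omega
  have hn2cast : ∀ N, ((nn2 α N : ℕ) : ℝ) = (N:ℝ) - (nn1 α N : ℝ) := by
    intro N; simp only [nn2]; push_cast [Nat.cast_sub (hle N)]; ring
  -- sub-limits
  have he : Tendsto (fun N : ℕ => (1:ℝ)/N) atTop (𝓝 0) := tendsto_one_div_atTop_nhds_zero_nat
  have hu : Tendsto (fun N : ℕ => (nn1 α N : ℝ)/N) atTop (𝓝 α) :=
    (tendsto_nat_floor_mul_div_atTop hα0.le).comp tendsto_natCast_atTop_atTop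
  have hv : Tendsto (fun N : ℕ => (nn2 α N : ℝ)/N) atTop (𝓝 (1 - α)) := by
    apply Tendsto.congr' _ (tendsto_const_nhds.sub hu)
    filter_upwards [eventually_ge_atTop 1] with N hN
    have hN0 : (N:ℝ) ≠ 0 := by positivity
    rw [hn2cast N]
    field_simp
  -- limit of q/N
  have hkey : ∀ N, (nn1 α N + 1) * (nn2 α N + 1) - 1 < (qfun α N + 1) * (N+1) := by
    intro N
    have h1 := Nat.div_add_mod ((nn1 α N + 1) * (nn2 α N + 1) - 1) (N+1)
    have h2 := Nat.mod_lt ((nn1 α N + 1) * (nn2 α N + 1) - 1) (show 0 < N+1 by omega)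
    calc (nn1 α N + 1) * (nn2 α N + 1) - 1
        < (N+1) * (((nn1 α N + 1) * (nn2 α N + 1) - 1)/(N+1)) + (N+1) := by omega
      _ = (qfun α N + 1) * (N+1) := by rw [qfun]; ring
  have hmid : Tendsto (fun N : ℕ => (((nn1 α N:ℝ)+1)*((nn2 α N:ℝ)+1) - 1)/(((N:ℝ)+1)*N))
      atTop (𝓝 τ) := by
    have h1 : Tendsto (fun N : ℕ =>
        (((nn1 α N:ℝ)/N + 1/N)*((nn2 α N:ℝ)/N + 1/N) - (1/N)*(1/N))/((1 + 1/N)*1))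
        atTop (𝓝 (((α+0)*((1-α)+0) - 0*0)/((1+0)*1))) := by
      exact Tendsto.div (((hu.add he).mul (hv.add he)).sub (he.mul he))
        ((tendsto_const_nhds.add he).mul tendsto_const_nhds) (by norm_num)
    have h2 : ((α+0)*((1-α)+0) - 0*0)/((1+0)*1) = τ := by rw [hτdef]; ring
    rw [h2] at h1
    apply Tendsto.congr' _ h1
    filter_upwards [eventually_ge_atTop 1] with N hN
    have hN0 : (N:ℝ) ≠ 0 := by positivity
    field_simp
  have hq : Tendsto (fun N : ℕ => (qfun α N : ℝ)/N) atTop (𝓝 τ) := by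
    have hlow := hmid.sub he
    rw [sub_zero] at hlow
    apply tendsto_of_tendsto_of_tendsto_of_le_of_le' hlow hmid
    · -- lower bound: mid - 1/N ≤ q/N
      filter_upwards [eventually_ge_atTop 1] with N hN
      have hNpos : (0:ℝ) < N := by positivity
      have h3 : ((((nn1 α N + 1) * (nn2 α N + 1) - 1 : ℕ)):ℝ) < ((qfun α N : ℝ)+1) * ((N:ℝ)+1) := by
        exact_mod_cast hkey N
      have h4 : (((nn1 α N + 1) * (nn2 α N + 1) - 1 : ℕ):ℝ)
          = ((nn1 α N:ℝ)+1)*((nn2 α N:ℝ)+1) - 1 := by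
        have hge : 1 ≤ (nn1 α N + 1) * (nn2 α N + 1) :=
          Nat.mul_pos (Nat.succ_pos _) (Nat.succ_pos _)
        push_cast [Nat.cast_sub hge]
        ring
      rw [h4] at h3
      have hb : (((nn1 α N:ℝ)+1)*((nn2 α N:ℝ)+1) - 1)/(((N:ℝ)+1)*N) ≤ ((qfun α N:ℝ)+1)/N := by
        rw [div_le_div_iff₀ (by positivity) hNpos]
        calc (((nn1 α N:ℝ)+1)*((nn2 α N:ℝ)+1) - 1) * N
            ≤ (((qfun α N:ℝ)+1) * ((N:ℝ)+1)) * N :=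
              mul_le_mul_of_nonneg_right h3.le hNpos.le
          _ = ((qfun α N:ℝ)+1)*(((N:ℝ)+1)*N) := by ring
      have hc : ((qfun α N:ℝ)+1)/N = (qfun α N:ℝ)/N + 1/N := by ring
      linarith
    · -- upper bound: q/N ≤ mid
      filter_upwards [eventually_ge_atTop 1] with N hN
      have hNpos : (0:ℝ) < N := by positivity
      have h3 : (qfun α N : ℝ) ≤ (((nn1 α N + 1) * (nn2 α N + 1) - 1 : ℕ):ℝ)/((N:ℝ)+1) := by
        have := Nat.cast_div_le (α := ℝ) (m := (nn1 α N + 1) * (nn2 α N + 1) - 1) (n := N+1)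
        simpa [qfun] using this
      have hge : 1 ≤ (nn1 α N + 1) * (nn2 α N + 1) :=
        Nat.mul_pos (Nat.succ_pos _) (Nat.succ_pos _)
      have h4 : (((nn1 α N + 1) * (nn2 α N + 1) - 1 : ℕ):ℝ)
          = ((nn1 α N:ℝ)+1)*((nn2 α N:ℝ)+1) - 1 := by
        push_cast [Nat.cast_sub hge]; ring
      rw [h4] at h3
      rw [div_le_div_iff₀ hNpos (by positivity)]
      calc (qfun α N:ℝ) * (((N:ℝ)+1)*N) = ((qfun α N:ℝ) * ((N:ℝ)+1)) * N := by ring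
        _ ≤ (((nn1 α N:ℝ)+1)*((nn2 α N:ℝ)+1) - 1) * N := by
            apply mul_le_mul_of_nonneg_right _ hNpos.le
            rw [← le_div_iff₀ (by positivity : (0:ℝ) < (N:ℝ)+1)]
            exact h3
  -- main assembly
  have hden : ((α+0)*((1-α)+0)) ≠ 0 := by nlinarith
  have hmain : Tendsto (fun N : ℕ =>
      1 - ((qfun α N:ℝ)/N * ((qfun α N:ℝ)/N + 1/N))/(((nn1 α N:ℝ)/N + 1/N)*((nn2 α N:ℝ)/N + 1/N))
        - (1 + 1/N - 2*((qfun α N:ℝ)/N))/(1 + 1/N)) atTop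
      (𝓝 (1 - (τ*(τ+0))/((α+0)*((1-α)+0)) - (1+0-2*τ)/(1+0))) := by
    exact (tendsto_const_nhds.sub ((hq.mul (hq.add he)).div ((hu.add he).mul (hv.add he)) hden)).sub
      (((tendsto_const_nhds.add he).sub (hq.const_mul 2)).div (tendsto_const_nhds.add he)
        (by norm_num))
  have hval : 1 - (τ*(τ+0))/((α+0)*((1-α)+0)) - (1+0-2*τ)/(1+0) = τ := by
    rw [hτdef]
    field_simp
    ring
  rw [hval] at hmain
  rw [hτdef] at hmain
  apply Tendsto.congr' _ hmain
  filter_upwards [eventually_ge_atTop 1] with N hN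
  have hN0 : (N:ℝ) ≠ 0 := by positivity
  have h := TVD_exact (nn1 α N) (nn2 α N) (qfun α N) (by rw [hsum N]; rfl)
  have hfloor : (⌊α * (N:ℕ)⌋₊ : ℕ) = nn1 α N := rfl
  have hgoal : TVDagg 2 ⌊α * (N:ℕ)⌋₊ ((N:ℕ) - ⌊α * (N:ℕ)⌋₊) = TVDagg 2 (nn1 α N) (nn2 α N) := rfl
  have hns : (nn1 α N : ℝ) + (nn2 α N : ℝ) = (N:ℝ) := by
    rw [hn2cast N]; ring
  rw [hgoal, h, hns]
  have hn1p : (0:ℝ) < (nn1 α N:ℝ)+1 := by positivity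
  have hn2p : (0:ℝ) < (nn2 α N:ℝ)+1 := by positivity
  field_simp

end
end

section
/- Let c > 0 and α ∈ (0,1). Let N, n1 : ℕ → ℕ with n1(d) ≤ N(d) for all d, N(d)/√d → c and n1(d)/N(d) → α as d → ∞, and set n2(d) = N(d) − n1(d). Then the ratio binom(N(d), n1(d)) · binom(N(d)+d−1, d−1) / (binom(n1(d)+d−1, d−1) · binom(n2(d)+d−1, d−1)) converges to e^{α(1−α)c²} as d → ∞. -/
open Finset Filter Topology Nat

noncomputable section

lemma fact_prod (e : ℕ) : ∀ k : ℕ,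
    (e ! : ℝ) * ∏ i ∈ Finset.range k, ((e : ℝ) + 1 + i) = ((e + k)! : ℝ)
  | 0 => by simp
  | (k+1) => by
    rw [Finset.prod_range_succ, ← mul_assoc, fact_prod e k]
    push_cast [← Nat.add_assoc, Nat.factorial_succ (e + k)]
    ring

lemma ratio_eq (n1 n2 e : ℕ) :
    (((n1 + n2).choose n1 : ℝ) * ((n1 + n2 + e).choose e : ℝ)) /
      (((n1 + e).choose e : ℝ) * ((n2 + e).choose e : ℝ)) =
    ∏ i ∈ Finset.range n1, (((n2 : ℝ) + e + 1 + i) / ((e : ℝ) + 1 + i)) := by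
  have h1 : (((n1 + n2).choose n1 : ℝ)) = ((n1 + n2)! : ℝ) / (n1 ! * n2 !) := by
    rw [Nat.cast_choose ℝ (Nat.le_add_right _ _), Nat.add_sub_cancel_left]
  have h2 : (((n1 + n2 + e).choose e : ℝ)) = ((n1 + n2 + e)! : ℝ) / (e ! * (n1 + n2)!) := by
    rw [add_comm (n1+n2) e, Nat.cast_choose ℝ (Nat.le_add_right _ _),
      Nat.add_sub_cancel_left, add_comm e (n1+n2)]
  have h3 : (((n1 + e).choose e : ℝ)) = ((n1 + e)! : ℝ) / (e ! * n1 !) := by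
    rw [add_comm n1 e, Nat.cast_choose ℝ (Nat.le_add_right _ _),
      Nat.add_sub_cancel_left, add_comm e n1]
  have h4 : (((n2 + e).choose e : ℝ)) = ((n2 + e)! : ℝ) / (e ! * n2 !) := by
    rw [add_comm n2 e, Nat.cast_choose ℝ (Nat.le_add_right _ _),
      Nat.add_sub_cancel_left, add_comm e n2]
  have p1 : (e ! : ℝ) * ∏ i ∈ Finset.range n1, ((e : ℝ) + 1 + i) = ((e + n1)! : ℝ) :=
    fact_prod e n1
  have p2 : ((n2 + e)! : ℝ) * ∏ i ∈ Finset.range n1, ((n2 : ℝ) + e + 1 + i)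
      = ((n2 + e + n1)! : ℝ) := by
    have := fact_prod (n2 + e) n1
    push_cast at this ⊢
    convert this using 4 with i
  rw [h1, h2, h3, h4, Finset.prod_div_distrib]
  have hp1ne : (∏ i ∈ Finset.range n1, ((e : ℝ) + 1 + i)) ≠ 0 := by
    apply Finset.prod_ne_zero_iff.2
    intro i _
    positivity
  have hfe : (e ! : ℝ) ≠ 0 := by positivity
  have hfn1 : (n1 ! : ℝ) ≠ 0 := by positivity
  have hfn2 : (n2 ! : ℝ) ≠ 0 := by positivity
  have hf2 : ((n1+n2)! : ℝ) ≠ 0 := by positivity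
  have hf3 : ((n1+e)! : ℝ) ≠ 0 := by positivity
  have hf4 : ((n2+e)! : ℝ) ≠ 0 := by positivity
  have key : ((n1 + n2 + e)! : ℝ) = ((n2 + e + n1)! : ℝ) := by ring_nf
  have key2 : ((n1 + e)! : ℝ) = ((e + n1)! : ℝ) := by rw [add_comm]
  rw [key, key2, ← p1, ← p2]
  field_simp

lemma upper_bound (n1 n2 d : ℕ) (hd : 1 ≤ d) :
    ∏ i ∈ Finset.range n1, (((n2 : ℝ) + d + i) / ((d : ℝ) + i)) ≤
      Real.exp ((n1 : ℝ) * n2 / d) := by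
  have hd' : (0 : ℝ) < d := by exact_mod_cast hd
  calc ∏ i ∈ Finset.range n1, (((n2 : ℝ) + d + i) / ((d : ℝ) + i))
      ≤ ∏ _i ∈ Finset.range n1, Real.exp ((n2 : ℝ) / d) := by
        apply Finset.prod_le_prod
        · intro i _; positivity
        · intro i _
          have hdi : (0 : ℝ) < (d : ℝ) + i := by positivity
          have h1 : ((n2 : ℝ) + d + i) / ((d : ℝ) + i) = 1 + (n2 : ℝ) / ((d : ℝ) + i) := by
            field_simp; ring
          have h2 : (n2 : ℝ) / ((d : ℝ) + i) ≤ (n2 : ℝ) / d := by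
            have h0 : (0:ℝ) ≤ (i:ℝ) := by positivity
            gcongr
            linarith
          have h3 := Real.add_one_le_exp ((n2 : ℝ) / d)
          rw [h1]; linarith
    _ = Real.exp ((n1 : ℝ) * n2 / d) := by
        rw [Finset.prod_const, ← Real.exp_nat_mul]
        congr 1
        rw [Finset.card_range]
        ring

lemma lower_bound (n1 n2 d : ℕ) (hd : 1 ≤ d) :
    Real.exp ((n1 : ℝ) * n2 / ((d : ℝ) + n1 + n2)) ≤
      ∏ i ∈ Finset.range n1, (((n2 : ℝ) + d + i) / ((d : ℝ) + i)) := by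
  have hd' : (0 : ℝ) < d := by exact_mod_cast hd
  calc Real.exp ((n1 : ℝ) * n2 / ((d : ℝ) + n1 + n2))
      = ∏ _i ∈ Finset.range n1, Real.exp ((n2 : ℝ) / ((d : ℝ) + n1 + n2)) := by
        rw [Finset.prod_const, ← Real.exp_nat_mul]
        congr 1
        rw [Finset.card_range]
        ring
    _ ≤ ∏ i ∈ Finset.range n1, (((n2 : ℝ) + d + i) / ((d : ℝ) + i)) := by
        apply Finset.prod_le_prod
        · intro i _; positivity
        · intro i hi
          have hi' : (i : ℝ) ≤ n1 := by
            exact_mod_cast (Finset.mem_range.1 hi).le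
          have hdi : (0 : ℝ) < (d : ℝ) + i := by positivity
          set y : ℝ := 1 + (n2 : ℝ) / ((d : ℝ) + i) with hy
          have hypos : 0 < y := by positivity
          have hinv : 1 - y⁻¹ = (n2 : ℝ) / ((d : ℝ) + i + n2) := by
            rw [hy, one_add_div (ne_of_gt hdi), inv_div]
            rw [eq_div_iff (by positivity : ((d:ℝ) + i + n2) ≠ 0)]
            field_simp
            ring
          have hlog := Real.one_sub_inv_le_log_of_pos hypos
          have key : Real.exp ((n2 : ℝ) / ((d : ℝ) + i + n2)) ≤ y := by
            rw [← hinv]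
            calc Real.exp (1 - y⁻¹) ≤ Real.exp (Real.log y) := Real.exp_le_exp.2 hlog
              _ = y := Real.exp_log hypos
          have hmono : (n2 : ℝ) / ((d : ℝ) + n1 + n2) ≤ (n2 : ℝ) / ((d : ℝ) + i + n2) := by
            gcongr
          have heq : ((n2 : ℝ) + d + i) / ((d : ℝ) + i) = y := by
            rw [hy]; field_simp; ring
          rw [heq]
          exact le_trans (Real.exp_le_exp.2 hmono) key

lemma sqrt_nat_atTop : Tendsto (fun d : ℕ => Real.sqrt d) atTop atTop := by
  apply tendsto_atTop_atTop.2
  intro b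
  refine ⟨(⌈b⌉₊) ^ 2, fun a ha => ?_⟩
  have h1 : (⌈b⌉₊ : ℝ) ^ 2 ≤ (a : ℝ) := by exact_mod_cast ha
  calc b ≤ (⌈b⌉₊ : ℝ) := Nat.le_ceil b
    _ = Real.sqrt ((⌈b⌉₊ : ℝ) ^ 2) := (Real.sqrt_sq (Nat.cast_nonneg _)).symm
    _ ≤ Real.sqrt a := Real.sqrt_le_sqrt h1

theorem stmt6 (c α : ℝ) (hc : 0 < c) (hα : α ∈ Set.Ioo (0 : ℝ) 1)
    (N n1 : ℕ → ℕ) (hle : ∀ d, n1 d ≤ N d)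
    (hN : Tendsto (fun d : ℕ => (N d : ℝ) / Real.sqrt d) atTop (nhds c))
    (hn1 : Tendsto (fun d : ℕ => (n1 d : ℝ) / (N d : ℝ)) atTop (nhds α)) :
    Tendsto (fun d : ℕ =>
        ((N d).choose (n1 d) : ℝ) * ((N d + d - 1).choose (d - 1) : ℝ) /
          (((n1 d + d - 1).choose (d - 1) : ℝ) *
            ((N d - n1 d + d - 1).choose (d - 1) : ℝ))) atTop
      (nhds (Real.exp (α * (1 - α) * c ^ 2))) := by
  set L : ℝ := α * (1 - α) * c ^ 2 with hL
  set n2 : ℕ → ℕ := fun d => N d - n1 d with hn2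
  have hcast : ∀ d, (n2 d : ℝ) = (N d : ℝ) - (n1 d : ℝ) := fun d => by
    simp only [hn2]
    exact_mod_cast Nat.cast_sub (hle d)
  have hA : Tendsto (fun d : ℕ => (n1 d : ℝ) / Real.sqrt d) atTop (nhds (α * c)) := by
    have h := hn1.mul hN
    apply h.congr
    intro d
    by_cases h0 : (N d : ℝ) = 0
    · have hn0 : n1 d = 0 := by
        have h1 := hle d
        have hN0 : N d = 0 := by exact_mod_cast h0
        omega
      simp [hn0, h0]
    · rw [_root_.div_mul_div_comm, mul_comm ((n1 d : ℝ)) ((N d : ℝ)), mul_div_mul_left _ _ h0]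
  have hB : Tendsto (fun d : ℕ => (n2 d : ℝ) / Real.sqrt d) atTop (nhds ((1 - α) * c)) := by
    have h := hN.sub hA
    have hv : c - α * c = (1 - α) * c := by ring
    rw [hv] at h
    apply h.congr
    intro d
    rw [hcast d, sub_div]
  have hsqrtinv : Tendsto (fun d : ℕ => (Real.sqrt d)⁻¹) atTop (nhds 0) :=
    sqrt_nat_atTop.inv_tendsto_atTop
  have hNd : Tendsto (fun d : ℕ => (N d : ℝ) / d) atTop (nhds 0) := by
    have h := hN.mul hsqrtinv
    rw [mul_zero] at h
    apply h.congr
    intro d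
    rw [← div_eq_mul_inv, div_div, Real.mul_self_sqrt (Nat.cast_nonneg d)]
  have hw : Tendsto (fun d : ℕ => (d : ℝ) / ((d : ℝ) + N d)) atTop (nhds 1) := by
    have h1 : Tendsto (fun d : ℕ => 1 + (N d : ℝ) / d) atTop (nhds 1) := by
      simpa using tendsto_const_nhds.add hNd
    have h2 := h1.inv₀ (by norm_num : (1 : ℝ) ≠ 0)
    rw [inv_one] at h2
    apply h2.congr'
    filter_upwards [eventually_ge_atTop 1] with d hd
    have hd0 : (0 : ℝ) < d := by exact_mod_cast hd
    have hdN : (0 : ℝ) < (d : ℝ) + N d := by positivity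
    field_simp
  have hu : Tendsto (fun d : ℕ => (n1 d : ℝ) * n2 d / d) atTop (nhds L) := by
    have h := hA.mul hB
    have hv : α * c * ((1 - α) * c) = L := by rw [hL]; ring
    rw [hv] at h
    apply h.congr
    intro d
    rw [_root_.div_mul_div_comm, Real.mul_self_sqrt (Nat.cast_nonneg d)]
  have hl : Tendsto (fun d : ℕ => (n1 d : ℝ) * n2 d / ((d : ℝ) + N d)) atTop (nhds L) := by
    have h := hu.mul hw
    rw [mul_one] at h
    apply h.congr'
    filter_upwards [eventually_ge_atTop 1] with d hd
    have hd0 : (0 : ℝ) < d := by exact_mod_cast hd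
    have hdN : (0 : ℝ) < (d : ℝ) + N d := by positivity
    field_simp
  have hexpl : Tendsto (fun d : ℕ => Real.exp ((n1 d : ℝ) * n2 d / ((d : ℝ) + N d)))
      atTop (nhds (Real.exp L)) := (Real.continuous_exp.tendsto L).comp hl
  have hexpu : Tendsto (fun d : ℕ => Real.exp ((n1 d : ℝ) * n2 d / d))
      atTop (nhds (Real.exp L)) := (Real.continuous_exp.tendsto L).comp hu
  have hGall : ∀ d : ℕ, 1 ≤ d →
      ((N d).choose (n1 d) : ℝ) * ((N d + d - 1).choose (d - 1) : ℝ) /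
        (((n1 d + d - 1).choose (d - 1) : ℝ) * ((N d - n1 d + d - 1).choose (d - 1) : ℝ))
      = ∏ i ∈ Finset.range (n1 d), (((n2 d : ℝ) + d + i) / ((d : ℝ) + i)) := by
    intro d hd
    have hn2d : n2 d = N d - n1 d := rfl
    have h1 := hle d
    have e1 : N d = n1 d + n2 d := by omega
    have e2 : N d + d - 1 = n1 d + n2 d + (d - 1) := by omega
    have e3 : n1 d + d - 1 = n1 d + (d - 1) := by omega
    have e4 : N d - n1 d + d - 1 = n2 d + (d - 1) := by omega
    rw [e2, e3, e4, show (N d).choose (n1 d) = (n1 d + n2 d).choose (n1 d) by rw [← e1]]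
    rw [ratio_eq (n1 d) (n2 d) (d - 1)]
    apply Finset.prod_congr rfl
    intro i _
    have hce : ((d - 1 : ℕ) : ℝ) = (d : ℝ) - 1 := by
      rw [Nat.cast_sub hd, Nat.cast_one]
    rw [hce]
    congr 1 <;> ring
  apply tendsto_of_tendsto_of_tendsto_of_le_of_le' hexpl hexpu
  · filter_upwards [eventually_ge_atTop 1] with d hd
    rw [hGall d hd]
    have hden : (d : ℝ) + n1 d + n2 d = (d : ℝ) + N d := by
      rw [hcast d]; ring
    calc Real.exp ((n1 d : ℝ) * n2 d / ((d : ℝ) + N d))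
        = Real.exp ((n1 d : ℝ) * n2 d / ((d : ℝ) + n1 d + n2 d)) := by rw [hden]
      _ ≤ _ := lower_bound (n1 d) (n2 d) d hd
  · filter_upwards [eventually_ge_atTop 1] with d hd
    rw [hGall d hd]
    exact upper_bound (n1 d) (n2 d) d hd

end
end

section
/- Fix an integer k ≥ 0 and α ∈ (0,1). Let n1 = n1(N) with n1(N)/N → α and n2 = N − n1, and for each N ≥ 2k let λ_N be any histogram (in any dimension d ≥ N − k) having exactly k entries equal to 2, exactly N − 2k entries equal to 1, and all other entries 0. Then L_{λ_N}(n1, n2) / binom(N, n1) → (1 − α(1−α))^k as N → ∞. -/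
open Finset Filter Topology

noncomputable section

lemma sum_eq_split {d : ℕ} (a : Fin d → ℕ) (ha : ∀ j, a j ≤ 2) :
    ∑ j, a j = 2 * #(univ.filter fun j => a j = 2) + #(univ.filter fun j => a j = 1) := by
  classical
  rw [← Finset.sum_filter_add_sum_filter_not univ (fun j => a j = 2)]
  have h1 : ∑ j ∈ univ.filter (fun j => a j = 2), a j
      = 2 * #(univ.filter fun j => a j = 2) := by
    rw [Finset.sum_congr rfl (fun j hj => (Finset.mem_filter.1 hj).2), Finset.sum_const,
      smul_eq_mul, mul_comm]
  have h2 : ∑ j ∈ univ.filter (fun j => ¬ a j = 2), a j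
      = #(univ.filter fun j => a j = 1) := by
    rw [← Finset.sum_filter_add_sum_filter_not (univ.filter fun j => ¬ a j = 2)
      (fun j => a j = 1)]
    have hz : ∑ j ∈ (univ.filter fun j => ¬ a j = 2).filter (fun j => ¬ a j = 1), a j = 0 := by
      apply Finset.sum_eq_zero
      intro j hj
      simp only [Finset.mem_filter] at hj
      have := ha j
      omega
    have hone : ∑ j ∈ (univ.filter fun j => ¬ a j = 2).filter (fun j => a j = 1), a j
        = #(univ.filter fun j => a j = 1) := by
      have hset : (univ.filter fun j => ¬ a j = 2).filter (fun j => a j = 1)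
          = univ.filter fun j => a j = 1 := by
        rw [Finset.filter_filter]
        ext j
        simp only [Finset.mem_filter, Finset.mem_univ, true_and]
        omega
      rw [hset, Finset.sum_congr rfl (fun j hj => (Finset.mem_filter.1 hj).2),
        Finset.sum_const, smul_eq_mul, mul_one]
    rw [hone, hz, add_zero]
  rw [h1, h2]

lemma filt_two {d : ℕ} (T S : Finset (Fin d)) (hTS : ∀ x ∈ S, x ∉ T) :
    (univ.filter fun x => (if x ∈ T then 2 else if x ∈ S then 1 else 0 : ℕ) = 2) = T := by
  ext x
  simp only [Finset.mem_filter, Finset.mem_univ, true_and]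
  by_cases hT : x ∈ T
  · simp [hT]
  · by_cases hS : x ∈ S <;> simp [hT, hS]

lemma filt_one {d : ℕ} (T S : Finset (Fin d)) (hTS : ∀ x ∈ S, x ∉ T) :
    (univ.filter fun x => (if x ∈ T then 2 else if x ∈ S then 1 else 0 : ℕ) = 1) = S := by
  ext x
  simp only [Finset.mem_filter, Finset.mem_univ, true_and]
  by_cases hT : x ∈ T
  · simp only [hT, if_true]
    constructor
    · omega
    · intro hS; exact absurd hT (hTS x hS)
  · by_cases hS : x ∈ S <;> simp [hT, hS]

lemma count_eq {d : ℕ} (lam : Fin d → ℕ) (k n m : ℕ)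
    (hk : #(univ.filter fun j => lam j = 2) = k)
    (hn : #(univ.filter fun j => lam j = 1) = n)
    (hcap : ∀ j, lam j ≤ 2) :
    Lfun lam m = ∑ t ∈ range (k+1),
      k.choose t * (if 2*t ≤ m then (k + n - t).choose (m - 2*t) else 0) := by
  classical
  set Two := univ.filter fun j => lam j = 2 with hTwo
  set One := univ.filter fun j => lam j = 1 with hOne
  have hdisj : Disjoint Two One := by
    rw [Finset.disjoint_left]
    intro x hx hx'
    rw [hTwo, Finset.mem_filter] at hx
    rw [hOne, Finset.mem_filter] at hx'
    omega
  set P : Finset (Finset (Fin d) × Finset (Fin d)) :=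
    Two.powerset.biUnion (fun T => {T} ×ˢ
      (if 2*T.card ≤ m then ((Two ∪ One) \ T).powersetCard (m - 2*T.card) else ∅)) with hP
  have hmem : ∀ p : Finset (Fin d) × Finset (Fin d),
      p ∈ P ↔ p.1 ⊆ Two ∧ 2*p.1.card ≤ m ∧ p.2 ⊆ (Two ∪ One) \ p.1
        ∧ p.2.card = m - 2*p.1.card := by
    intro p
    rw [hP, Finset.mem_biUnion]
    constructor
    · rintro ⟨T, hT, hpT⟩
      rw [Finset.mem_product, Finset.mem_singleton] at hpT
      obtain ⟨h1, h2⟩ := hpT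
      subst h1
      rw [Finset.mem_powerset] at hT
      split_ifs at h2 with hg
      · rw [Finset.mem_powersetCard] at h2
        exact ⟨hT, hg, h2.1, h2.2⟩
      · simp at h2
    · rintro ⟨h1, h2, h3, h4⟩
      refine ⟨p.1, Finset.mem_powerset.2 h1, ?_⟩
      rw [Finset.mem_product, Finset.mem_singleton]
      refine ⟨rfl, ?_⟩
      rw [if_pos h2, Finset.mem_powersetCard]
      exact ⟨h3, h4⟩
  have hbij : Lfun lam m = P.card := by
    unfold Lfun
    apply Finset.card_bij'
      (i := fun a _ => ((univ.filter fun j => a j = 2), (univ.filter fun j => a j = 1)))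
      (j := fun p _ => fun x => if x ∈ p.1 then 2 else if x ∈ p.2 then 1 else 0)
    case hi =>
      intro a ha
      rw [Finset.mem_filter, Finset.Nat.mem_antidiagonalTuple] at ha
      obtain ⟨hsum, hcapa⟩ := ha
      have ha2 : ∀ j, a j ≤ 2 := fun j => (hcapa j).trans (hcap j)
      have hkey := sum_eq_split a ha2
      rw [hsum] at hkey
      rw [hmem]
      dsimp only
      refine ⟨?_, by omega, ?_, by omega⟩
      · intro x hx
        rw [Finset.mem_filter] at hx
        rw [hTwo, Finset.mem_filter]
        have := hcap x; have := hcapa x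
        exact ⟨Finset.mem_univ x, by omega⟩
      · intro x hx
        rw [Finset.mem_filter] at hx
        rw [Finset.mem_sdiff, Finset.mem_union, hTwo, hOne, Finset.mem_filter,
          Finset.mem_filter, Finset.mem_filter]
        have := hcap x; have := hcapa x
        constructor
        · rcases Nat.lt_or_ge (lam x) 2 with h | h
          · right; exact ⟨Finset.mem_univ x, by omega⟩
          · left; exact ⟨Finset.mem_univ x, by omega⟩
        · simp only [Finset.mem_univ, true_and]
          omega
    case hj =>
      intro p hp
      rw [hmem] at hp
      obtain ⟨h1, h2, h3, h4⟩ := hp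
      have hTS : ∀ x ∈ p.2, x ∉ p.1 := fun x hx => (Finset.mem_sdiff.1 (h3 hx)).2
      rw [Finset.mem_filter, Finset.Nat.mem_antidiagonalTuple]
      constructor
      · have hcap2 : ∀ j, (if j ∈ p.1 then 2 else if j ∈ p.2 then 1 else 0 : ℕ) ≤ 2 := by
          intro j; split_ifs <;> omega
        rw [sum_eq_split _ hcap2, filt_two p.1 p.2 hTS, filt_one p.1 p.2 hTS]
        omega
      · intro j
        by_cases hT : j ∈ p.1
        · have := h1 hT
          rw [hTwo, Finset.mem_filter] at this
          simp [hT, this.2]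
        · by_cases hS : j ∈ p.2
          · have := (Finset.mem_sdiff.1 (h3 hS)).1
            rw [Finset.mem_union, hTwo, hOne, Finset.mem_filter, Finset.mem_filter] at this
            simp only [hT, if_false, hS, if_true]
            rcases this with h | h <;> omega
          · simp [hT, hS]
    case left_inv =>
      intro a ha
      rw [Finset.mem_filter, Finset.Nat.mem_antidiagonalTuple] at ha
      have ha2 : ∀ j, a j ≤ 2 := fun j => (ha.2 j).trans (hcap j)
      funext x
      simp only [Finset.mem_filter, Finset.mem_univ, true_and]
      have := ha2 x
      split_ifs <;> omega
    case right_inv =>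
      intro p hp
      rw [hmem] at hp
      obtain ⟨h1, h2, h3, h4⟩ := hp
      have hTS : ∀ x ∈ p.2, x ∉ p.1 := fun x hx => (Finset.mem_sdiff.1 (h3 hx)).2
      exact Prod.ext (filt_two p.1 p.2 hTS) (filt_one p.1 p.2 hTS)
  rw [hbij, hP, Finset.card_biUnion]
  · have hcongr : ∀ T ∈ Two.powerset,
        ({T} ×ˢ (if 2*T.card ≤ m then ((Two ∪ One) \ T).powersetCard (m - 2*T.card) else ∅)).card
        = (if 2*T.card ≤ m then (k + n - T.card).choose (m - 2*T.card) else 0) := by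
      intro T hT
      rw [Finset.mem_powerset] at hT
      rw [Finset.card_product, Finset.card_singleton, one_mul]
      split_ifs with hg
      · rw [Finset.card_powersetCard, Finset.card_sdiff_of_subset (hT.trans Finset.subset_union_left),
          Finset.card_union_of_disjoint hdisj, hk, hn]
      · simp
    rw [Finset.sum_congr rfl hcongr, Finset.sum_powerset_apply_card
      (fun t => if 2*t ≤ m then (k + n - t).choose (m - 2*t) else 0), hk]
    refine Finset.sum_congr rfl fun t _ => ?_
    rw [smul_eq_mul]
  · -- pairwise disjoint
    intro T hT T' hT' hne
    rw [Function.onFun, Finset.disjoint_left]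
    intro p hp hp'
    apply hne
    rw [Finset.mem_product, Finset.mem_singleton] at hp hp'
    rw [← hp.1, ← hp'.1]

lemma prod_desc (n p : ℕ) (h : p ≤ n) :
    (∏ i ∈ range p, ((n:ℝ) - i)) = (Nat.factorial n : ℝ) / (Nat.factorial (n - p) : ℝ) := by
  have h1 : ((n.descFactorial p : ℕ) : ℝ) = ∏ i ∈ range p, ((n:ℝ) - i) := by
    rw [Nat.descFactorial_eq_prod_range]
    push_cast
    refine Finset.prod_congr rfl fun i hi => ?_
    rw [Finset.mem_range] at hi
    rw [Nat.cast_sub (by omega)]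
  rw [← h1, eq_div_iff (by exact_mod_cast (Nat.factorial_pos (n-p)).ne')]
  rw [← Nat.cast_mul, mul_comm]
  exact_mod_cast congrArg (Nat.cast (R := ℝ)) (Nat.factorial_mul_descFactorial h)

lemma choose_ratio (a b p q : ℕ) (hp : p ≤ a) (hq : q ≤ b) :
    (((a + b - (p + q)).choose (a - p) : ℝ)) / (((a+b).choose a : ℕ) : ℝ)
      = (∏ i ∈ range p, ((a:ℝ) - i)) * (∏ i ∈ range q, ((b:ℝ) - i))
        / (∏ i ∈ range (p+q), (((a+b : ℕ):ℝ) - i)) := by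
  rw [prod_desc a p hp, prod_desc b q hq, prod_desc (a+b) (p+q) (by omega)]
  rw [Nat.cast_choose ℝ (show a - p ≤ a + b - (p + q) by omega),
    Nat.cast_choose ℝ (show a ≤ a + b by omega)]
  have e1 : a + b - (p + q) - (a - p) = b - q := by omega
  have e2 : a + b - a = b := by omega
  rw [e1, e2]
  have f1 : (Nat.factorial (a-p) : ℝ) ≠ 0 := by exact_mod_cast (Nat.factorial_pos _).ne'
  have f2 : (Nat.factorial (b-q) : ℝ) ≠ 0 := by exact_mod_cast (Nat.factorial_pos _).ne'
  have f3 : (Nat.factorial (a + b - (p+q)) : ℝ) ≠ 0 := by exact_mod_cast (Nat.factorial_pos _).ne'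
  have f4 : (Nat.factorial (a+b) : ℝ) ≠ 0 := by exact_mod_cast (Nat.factorial_pos _).ne'
  have f5 : (Nat.factorial a : ℝ) ≠ 0 := by exact_mod_cast (Nat.factorial_pos _).ne'
  have f6 : (Nat.factorial b : ℝ) ≠ 0 := by exact_mod_cast (Nat.factorial_pos _).ne'
  field_simp

lemma sub_const_div_tendsto (c : ℝ) (f : ℕ → ℝ) (L : ℝ)
    (h : Filter.Tendsto (fun N : ℕ => f N / N) atTop (nhds L)) :
    Filter.Tendsto (fun N : ℕ => (f N - c) / N) atTop (nhds L) := by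
  have hc : Filter.Tendsto (fun N : ℕ => c / N) atTop (nhds 0) :=
    tendsto_const_div_atTop_nhds_zero_nat c
  have := h.sub hc
  rw [sub_zero] at this
  exact this.congr fun N => (sub_div _ _ _).symm

lemma tendsto_choose_ratio (α : ℝ) (hα : α ∈ Set.Ioo (0:ℝ) 1) (n1 : ℕ → ℕ)
    (hle : ∀ N, n1 N ≤ N)
    (hn1 : Filter.Tendsto (fun N : ℕ => (n1 N : ℝ) / N) atTop (nhds α)) (p q : ℕ) :
    Filter.Tendsto (fun N => ((N - (p+q)).choose (n1 N - p) : ℝ) / ((N.choose (n1 N) : ℕ) : ℝ))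
      atTop (nhds (α ^ p * (1 - α) ^ q)) := by
  obtain ⟨hα0, hα1⟩ := hα
  -- auxiliary tendsto facts
  have hNN : Filter.Tendsto (fun N : ℕ => (N:ℝ)/N) atTop (nhds 1) := by
    apply Filter.Tendsto.congr' _ tendsto_const_nhds
    filter_upwards [eventually_ne_atTop 0] with N hN
    rw [div_self (by exact_mod_cast hN)]
  have hn2 : Filter.Tendsto (fun N : ℕ => ((N:ℝ) - n1 N)/N) atTop (nhds (1 - α)) := by
    apply Filter.Tendsto.congr' _ (tendsto_const_nhds.sub hn1)
    filter_upwards [eventually_ne_atTop 0] with N hN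
    rw [sub_div, div_self (by exact_mod_cast hN)]
  have h1inf : Filter.Tendsto (fun N : ℕ => (n1 N : ℝ)) atTop atTop := by
    apply Filter.Tendsto.congr' _ (hn1.pos_mul_atTop hα0 tendsto_natCast_atTop_atTop)
    filter_upwards [eventually_ne_atTop 0] with N hN
    field_simp
  have h2inf : Filter.Tendsto (fun N : ℕ => (N:ℝ) - n1 N) atTop atTop := by
    apply Filter.Tendsto.congr' _ (hn2.pos_mul_atTop (by linarith) tendsto_natCast_atTop_atTop)
    filter_upwards [eventually_ne_atTop 0] with N hN
    field_simp
  have hp_ev : ∀ᶠ N in atTop, p ≤ n1 N := by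
    filter_upwards [h1inf.eventually_ge_atTop (p:ℝ)] with N hN
    exact_mod_cast hN
  have hq_ev : ∀ᶠ N in atTop, q ≤ N - n1 N := by
    filter_upwards [h2inf.eventually_ge_atTop (q:ℝ)] with N hN
    have := hle N
    rw [show (N:ℝ) - n1 N = ((N - n1 N : ℕ) : ℝ) by push_cast [this]; ring] at hN
    exact_mod_cast hN
  -- the limit of the product form
  have hA : Filter.Tendsto (fun N : ℕ => ∏ i ∈ range p, ((n1 N : ℝ) - i)/N)
      atTop (nhds (α ^ p)) := by
    have h := tendsto_finset_prod (f := fun (i : ℕ) (N : ℕ) => ((n1 N : ℝ) - i)/N)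
      (a := fun _ => α) (range p)
      (fun i _ => sub_const_div_tendsto (i:ℝ) _ _ hn1)
    rwa [Finset.prod_const, Finset.card_range] at h
  have hB : Filter.Tendsto (fun N : ℕ => ∏ i ∈ range q, (((N:ℝ) - n1 N) - i)/N)
      atTop (nhds ((1-α) ^ q)) := by
    have h := tendsto_finset_prod (f := fun (i : ℕ) (N : ℕ) => (((N:ℝ) - n1 N) - i)/N)
      (a := fun _ => 1 - α) (range q)
      (fun i _ => sub_const_div_tendsto (i:ℝ) _ _ hn2)
    rwa [Finset.prod_const, Finset.card_range] at h
  have hC : Filter.Tendsto (fun N : ℕ => ∏ i ∈ range (p+q), ((N:ℝ) - i)/N)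
      atTop (nhds 1) := by
    have h := tendsto_finset_prod (f := fun (i : ℕ) (N : ℕ) => ((N:ℝ) - i)/N)
      (a := fun _ => 1) (range (p+q))
      (fun i _ => sub_const_div_tendsto (i:ℝ) _ _ hNN)
    rwa [Finset.prod_const, one_pow] at h
  have hG : Filter.Tendsto (fun N : ℕ =>
      (∏ i ∈ range p, ((n1 N : ℝ) - i)/N) * (∏ i ∈ range q, (((N:ℝ) - n1 N) - i)/N)
        / (∏ i ∈ range (p+q), ((N:ℝ) - i)/N)) atTop (nhds (α ^ p * (1 - α) ^ q)) := by
    have h := (hA.mul hB).div hC one_ne_zero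
    rwa [div_one] at h
  -- eventual equality
  apply Filter.Tendsto.congr' _ hG
  filter_upwards [hp_ev, hq_ev, eventually_ne_atTop 0] with N hp' hq' hN0
  have hle' := hle N
  have hNval : n1 N + (N - n1 N) = N := by omega
  have key := choose_ratio (n1 N) (N - n1 N) p q hp' hq'
  rw [hNval] at key
  have hcast : ((N - n1 N : ℕ) : ℝ) = (N:ℝ) - n1 N := by push_cast [hle']; ring
  rw [hcast] at key
  have hNR : (N:ℝ) ≠ 0 := by exact_mod_cast hN0
  have hpq_le : p + q ≤ N := by omega
  have hP3 : (∏ i ∈ range (p+q), ((N:ℝ) - i)) ≠ 0 := by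
    apply ne_of_gt
    apply Finset.prod_pos
    intro i hi
    rw [Finset.mem_range] at hi
    have : (i:ℝ) < N := by exact_mod_cast lt_of_lt_of_le hi hpq_le
    linarith
  have hsplit : ∀ (r : ℕ) (f : ℕ → ℝ),
      (∏ i ∈ range r, f i / (N:ℝ)) = (∏ i ∈ range r, f i) / (N:ℝ)^r := by
    intro r f
    rw [Finset.prod_div_distrib, Finset.prod_const, Finset.card_range]
  rw [key, hsplit p, hsplit q, hsplit (p+q)]
  field_simp
  ring

theorem stmt7 (k : ℕ) (α : ℝ) (hα : α ∈ Set.Ioo (0 : ℝ) 1)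
    (n1 : ℕ → ℕ) (hle : ∀ N, n1 N ≤ N)
    (hn1 : Tendsto (fun N : ℕ => (n1 N : ℝ) / (N : ℝ)) atTop (nhds α))
    (d : ℕ → ℕ) (hd : ∀ N, N - k ≤ d N)
    (lam : (N : ℕ) → Fin (d N) → ℕ)
    (h2 : ∀ N, 2 * k ≤ N →
      ((Finset.univ.filter fun j => lam N j = 2).card = k ∧
       (Finset.univ.filter fun j => lam N j = 1).card = N - 2 * k ∧
       ∀ j, lam N j ≤ 2)) :
    Tendsto (fun N : ℕ => (Lfun (lam N) (n1 N) : ℝ) / (N.choose (n1 N) : ℝ)) atTop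
      (nhds ((1 - α * (1 - α)) ^ k)) := by
  obtain ⟨hα0, hα1⟩ := hα
  -- n1 tends to infinity
  have h1inf : Filter.Tendsto (fun N : ℕ => (n1 N : ℝ)) atTop atTop := by
    apply Filter.Tendsto.congr' _ (hn1.pos_mul_atTop hα0 tendsto_natCast_atTop_atTop)
    filter_upwards [eventually_ne_atTop 0] with N hN
    have : (N:ℝ) ≠ 0 := by exact_mod_cast hN
    field_simp
  have hev : ∀ᶠ N in atTop, 2 * k ≤ n1 N := by
    filter_upwards [h1inf.eventually_ge_atTop ((2*k : ℕ):ℝ)] with N hN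
    exact_mod_cast hN
  -- the limiting sum
  have hlim : (1 - α * (1 - α)) ^ k
      = ∑ t ∈ range (k+1), (k.choose t : ℝ) * (α ^ (2*t) * (1 - α) ^ (k - t)) := by
    rw [show (1 - α * (1 - α)) = α^2 + (1 - α) by ring, add_pow]
    refine Finset.sum_congr rfl fun t _ => ?_
    rw [pow_mul]
    ring
  rw [hlim]
  -- tendsto of the sum of ratios
  have hsum : Filter.Tendsto (fun N : ℕ => ∑ t ∈ range (k+1),
      (k.choose t : ℝ) * (((N - (2*t + (k - t))).choose (n1 N - 2*t) : ℝ)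
        / ((N.choose (n1 N) : ℕ) : ℝ))) atTop
      (nhds (∑ t ∈ range (k+1), (k.choose t : ℝ) * (α ^ (2*t) * (1 - α) ^ (k - t)))) := by
    apply tendsto_finset_sum
    intro t _
    exact (tendsto_choose_ratio α ⟨hα0, hα1⟩ n1 hle hn1 (2*t) (k - t)).const_mul _
  apply Filter.Tendsto.congr' _ hsum
  filter_upwards [hev, eventually_ge_atTop (2*k)] with N hn1k hNk
  obtain ⟨hk2, hk1, hcap⟩ := h2 N hNk
  rw [count_eq (lam N) k (N - 2*k) (n1 N) hk2 hk1 hcap]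
  rw [Nat.cast_sum, Finset.sum_div]
  refine Finset.sum_congr rfl fun t ht => ?_
  rw [Finset.mem_range] at ht
  have hguard : 2*t ≤ n1 N := by omega
  rw [if_pos hguard]
  have hidx : k + (N - 2*k) - t = N - (2*t + (k - t)) := by omega
  rw [hidx]
  push_cast
  ring

end
end

section
/- Let N, k, n1, n2, d be natural numbers with n1 + n2 = N, N ≥ 2k, and d ≥ N − k, and let λ : {0,…,d−1} → ℕ be a histogram with exactly k entries equal to 2, exactly N − 2k entries equal to 1, and all other entries 0. Then, as an identity of integers, L_λ(n1, n2) = ∑_{j=0}^{min(k, n1)} (−1)^j · binom(k, j) · binom(N − 2j, n1 − j), where binom(a, b) = 0 whenever b > a. -/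
open Finset Polynomial

noncomputable section

/-- `q m = 1 + X + ... + X^m`. -/
private def q (m : ℕ) : Polynomial ℤ := ∑ t ∈ Finset.range (m + 1), X ^ t

private lemma q_coeff (m i : ℕ) : (q m).coeff i = if i ≤ m then 1 else 0 := by
  simp only [q, finset_sum_coeff, coeff_X_pow]
  simp [eq_comm, Finset.sum_ite_eq, Nat.lt_succ_iff]

private lemma lfun_eq_coeff {d : ℕ} (lam : Fin d → ℕ) (n1 : ℕ) :
    (Lfun lam n1 : ℤ) = (∏ j : Fin d, q (lam j)).coeff n1 := by
  have h1 : (∏ j : Fin d, q (lam j)).coeff n1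
      = PowerSeries.coeff (R := ℤ) n1 ((∏ j : Fin d, q (lam j) : Polynomial ℤ) : PowerSeries ℤ) :=
    (Polynomial.coeff_coe _ _).symm
  have h2 : ((∏ j : Fin d, q (lam j) : Polynomial ℤ) : PowerSeries ℤ)
      = ∏ j : Fin d, ((q (lam j) : Polynomial ℤ) : PowerSeries ℤ) := by
    simp only [← Polynomial.coeToPowerSeries.ringHom_apply]
    exact map_prod _ _ _
  rw [h1, h2, PowerSeries.coeff_prod]
  simp only [Polynomial.coeff_coe, q_coeff]
  rw [Finset.sum_congr rfl (fun l _ => Finset.prod_boole (p := fun j => l j ≤ lam j))]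
  simp only [Finset.mem_univ, forall_true_left]
  rw [Finset.sum_boole]
  norm_cast
  unfold Lfun
  apply Finset.card_bij' (fun a _ => Finsupp.equivFunOnFinite.symm a) (fun l _ => (l : Fin d → ℕ))
  · intro a ha
    simp only [Finset.mem_filter, Finset.Nat.mem_antidiagonalTuple] at ha
    simp only [Finset.mem_filter, Finset.mem_finsuppAntidiag]
    refine ⟨⟨?_, Finset.subset_univ _⟩, ?_⟩
    · simpa using ha.1
    · simpa using ha.2
  · intro l hl
    simp only [Finset.mem_filter, Finset.mem_finsuppAntidiag] at hl
    simp only [Finset.mem_filter, Finset.Nat.mem_antidiagonalTuple]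
    exact ⟨hl.1.1, hl.2⟩
  · intro a _; rfl
  · intro l _; exact Finsupp.equivFunOnFinite.symm_apply_apply l


private lemma prod_q_eq {d k m : ℕ} (lam : Fin d → ℕ)
    (h2 : (Finset.univ.filter fun j => lam j = 2).card = k)
    (h1 : (Finset.univ.filter fun j => lam j = 1).card = m)
    (hle : ∀ j, lam j ≤ 2) :
    ∏ j : Fin d, q (lam j) = (1 + X + X ^ 2) ^ k * (1 + X) ^ m := by
  have hq2 : q 2 = 1 + X + X ^ 2 := by
    simp [q, Finset.sum_range_succ]
  have hq1 : q 1 = 1 + X := by simp [q, Finset.sum_range_succ]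
  have hq0 : q 0 = 1 := by simp [q]
  rw [← Finset.prod_filter_mul_prod_filter_not Finset.univ (fun j => lam j = 2)]
  have e1 : ∏ j ∈ Finset.univ.filter (fun j => lam j = 2), q (lam j) = (1 + X + X ^ 2) ^ k := by
    rw [Finset.prod_congr rfl (fun j hj => by
      rw [(Finset.mem_filter.1 hj).2, hq2]), Finset.prod_const, h2]
  have e2 : ∏ j ∈ Finset.univ.filter (fun j => ¬ lam j = 2), q (lam j) = (1 + X) ^ m := by
    rw [← Finset.prod_filter_mul_prod_filter_not
      (Finset.univ.filter (fun j => ¬ lam j = 2)) (fun j => lam j = 1)]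
    have hs : (Finset.univ.filter (fun j => ¬ lam j = 2)).filter (fun j => lam j = 1)
        = Finset.univ.filter (fun j => lam j = 1) := by
      ext j; simp only [Finset.mem_filter, Finset.mem_univ, true_and]
      constructor
      · exact fun h => h.2
      · intro h; omega
    have e3 : ∏ j ∈ (Finset.univ.filter (fun j => ¬ lam j = 2)).filter (fun j => lam j = 1),
        q (lam j) = (1 + X) ^ m := by
      rw [Finset.prod_congr rfl (fun j hj => by
        rw [(Finset.mem_filter.1 hj).2, hq1]), Finset.prod_const, hs, h1]
    have e4 : ∏ j ∈ (Finset.univ.filter (fun j => ¬ lam j = 2)).filter (fun j => ¬ lam j = 1),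
        q (lam j) = 1 := by
      apply Finset.prod_eq_one
      intro j hj
      simp only [Finset.mem_filter, Finset.mem_univ, true_and] at hj
      have := hle j
      have h0 : lam j = 0 := by omega
      rw [h0, hq0]
    rw [e3, e4, mul_one]
  rw [e1, e2]

theorem stmt8 (N k n1 n2 d : ℕ) (hsum : n1 + n2 = N) (hk : 2 * k ≤ N)
    (hd : N - k ≤ d) (lam : Fin d → ℕ)
    (h2 : (Finset.univ.filter fun j => lam j = 2).card = k)
    (h1 : (Finset.univ.filter fun j => lam j = 1).card = N - 2 * k)
    (hle : ∀ j, lam j ≤ 2) :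
    (Lfun lam n1 : ℤ) =
      ∑ j ∈ Finset.range (min k n1 + 1),
        (-1 : ℤ) ^ j * (k.choose j : ℤ) * (((N - 2 * j).choose (n1 - j)) : ℤ) := by
  rw [lfun_eq_coeff, prod_q_eq lam h2 h1 hle]
  have hpoly : ((1 : Polynomial ℤ) + X + X ^ 2) ^ k * (1 + X) ^ (N - 2 * k)
      = ∑ j ∈ Finset.range (k + 1),
          (-X) ^ j * ((1 + X) ^ 2) ^ (k - j) * (k.choose j : Polynomial ℤ)
            * (1 + X) ^ (N - 2 * k) := by
    rw [show (1 : Polynomial ℤ) + X + X ^ 2 = (-X) + (1 + X) ^ 2 by ring, add_pow,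
      Finset.sum_mul]
  rw [hpoly, Polynomial.finset_sum_coeff]
  have key : ∀ j ∈ Finset.range (k + 1),
      ((-X : Polynomial ℤ) ^ j * ((1 + X) ^ 2) ^ (k - j) * (k.choose j : Polynomial ℤ)
        * (1 + X) ^ (N - 2 * k)).coeff n1
      = (-1 : ℤ) ^ j * (k.choose j : ℤ)
          * (if j ≤ n1 then (((N - 2 * j).choose (n1 - j)) : ℤ) else 0) := by
    intro j hj
    have hjk : j ≤ k := Nat.lt_succ_iff.1 (Finset.mem_range.1 hj)
    have hre : (-X : Polynomial ℤ) ^ j * ((1 + X) ^ 2) ^ (k - j) * (k.choose j : Polynomial ℤ)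
        * (1 + X) ^ (N - 2 * k)
        = Polynomial.C ((-1) ^ j * (k.choose j : ℤ)) * ((1 + X) ^ (N - 2 * j) * X ^ j) := by
      have hexp : (((1 : Polynomial ℤ) + X) ^ 2) ^ (k - j) * (1 + X) ^ (N - 2 * k)
          = (1 + X) ^ (N - 2 * j) := by
        rw [← pow_mul, ← pow_add]; congr 1; omega
      have hC : (Polynomial.C ((-1) ^ j * (k.choose j : ℤ)) : Polynomial ℤ)
          = (-1) ^ j * (k.choose j : Polynomial ℤ) := by
        simp [map_mul, map_pow, map_natCast]
      rw [← hexp, hC]; ring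
    rw [hre, Polynomial.coeff_C_mul, Polynomial.coeff_mul_X_pow']
    split_ifs with h
    · rw [Polynomial.coeff_one_add_X_pow]
      try ring
    · try ring
      try simp
  rw [Finset.sum_congr rfl key]
  have hsub : Finset.range (min k n1 + 1) ⊆ Finset.range (k + 1) :=
    Finset.range_subset_range.2 (by omega)
  rw [← Finset.sum_subset hsub (fun j hj hj2 => by
    simp only [Finset.mem_range] at hj hj2
    have : ¬ j ≤ n1 := by omega
    rw [if_neg this, mul_zero])]
  exact Finset.sum_congr rfl (fun j hj => by
    rw [if_pos (by simp only [Finset.mem_range] at hj; omega)])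


end
end

section
/- For all integers d ≥ 1 and n1, n2 ≥ 0 with N = n1 + n2, the aggregate total variation distance is bounded by the block-resolved total variation distance: TVD_agg(d, n1, n2) ≤ TVD_res(d, n1, n2). -/
open Finset

noncomputable section

/-- The shared-unitary block-resolved pair-of-histograms law. -/
def Psh (d n1 n2 : ℕ) (a b : Fin d → ℕ) : ℝ :=
  ((n1.factorial : ℝ) * (n2.factorial : ℝ) * ((d - 1).factorial : ℝ) /
      ((n1 + n2 + d - 1).factorial : ℝ)) *
    ∏ j, ((a j + b j).factorial : ℝ) / (((a j).factorial : ℝ) * ((b j).factorial : ℝ))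

/-- The independent-blocks block-resolved pair-of-histograms law. -/
def Pind (d n1 n2 : ℕ) : ℝ :=
  1 / (((n1 + d - 1).choose (d - 1) : ℝ) * ((n2 + d - 1).choose (d - 1) : ℝ))

/-- The block-resolved total variation distance. -/
def TVDres (d n1 n2 : ℕ) : ℝ :=
  (1 / 2) * ∑ a ∈ Finset.Nat.antidiagonalTuple d n1,
    ∑ b ∈ Finset.Nat.antidiagonalTuple d n2, |Psh d n1 n2 a b - Pind d n1 n2|

/-- Generalized Vandermonde identity over `piAntidiag`. -/
lemma vand_pi {ι : Type*} [DecidableEq ι] (s : Finset ι) (lam : ι → ℕ) (n : ℕ) :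
    ∑ a ∈ s.piAntidiag n, ∏ j ∈ s, (lam j).choose (a j) = (∑ j ∈ s, lam j).choose n := by
  induction s using Finset.cons_induction generalizing n with
  | empty =>
    rw [Finset.piAntidiag_empty]
    rcases n with _ | n <;> simp
  | cons i s hi ih =>
    rw [Finset.piAntidiag_cons hi, Finset.sum_disjiUnion]
    have : ∀ p ∈ Finset.HasAntidiagonal.antidiagonal n,
        ∑ a ∈ (s.piAntidiag p.2).map (addRightEmbedding fun t => if t = i then p.1 else 0),
          ∏ j ∈ cons i s hi, (lam j).choose (a j)
        = (lam i).choose p.1 * (∑ j ∈ s, lam j).choose p.2 := by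
      intro (p : ℕ × ℕ) hp
      rw [Finset.sum_map]
      have : ∀ f ∈ s.piAntidiag p.2,
          ∏ j ∈ cons i s hi, (lam j).choose ((addRightEmbedding fun t => if t = i then p.1 else 0) f j)
          = (lam i).choose p.1 * ∏ j ∈ s, (lam j).choose (f j) := by
        intro f hf
        rw [Finset.mem_piAntidiag] at hf
        rw [Finset.prod_cons]
        simp only [addRightEmbedding_apply]
        have hfi : f i = 0 := by
          by_contra h
          exact hi (hf.2 i h)
        congr 1
        · simp [hfi]
        · refine Finset.prod_congr rfl fun j hj => ?_
          have : j ≠ i := fun h => hi (h ▸ hj)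
          simp [this]
      rw [Finset.sum_congr rfl this, ← Finset.mul_sum, ih]
    rw [Finset.sum_congr rfl this, Finset.sum_cons, Nat.add_choose_eq]

/-- Generalized Vandermonde identity for `antidiagonalTuple`. -/
lemma vand (d n : ℕ) (lam : Fin d → ℕ) :
    ∑ a ∈ Finset.Nat.antidiagonalTuple d n, ∏ j, (lam j).choose (a j)
      = (∑ j, lam j).choose n := by
  rw [← Finset.piAntidiag_univ_fin_eq_antidiagonalTuple n d, vand_pi]

/-- Summing a function of the first component over the fiber of pairs summing to `lam`
equals summing over the vectors dominated by `lam`. -/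
lemma fiber_sum {d n1 n2 : ℕ} (lam : Fin d → ℕ) (hlam : ∑ j, lam j = n1 + n2)
    {M : Type*} [AddCommMonoid M] (f : (Fin d → ℕ) → M) :
    ∑ p ∈ (Finset.Nat.antidiagonalTuple d n1 ×ˢ Finset.Nat.antidiagonalTuple d n2).filter
        (fun p => p.1 + p.2 = lam), f p.1
      = ∑ a ∈ (Finset.Nat.antidiagonalTuple d n1).filter (fun a => ∀ j, a j ≤ lam j), f a := by
  refine Finset.sum_nbij' (fun p => p.1) (fun a => (a, lam - a)) ?_ ?_ ?_ ?_ ?_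
  · rintro ⟨a, b⟩ hp
    simp only [Finset.mem_filter, Finset.mem_product, Finset.Nat.mem_antidiagonalTuple] at hp ⊢
    refine ⟨hp.1.1, fun j => ?_⟩
    rw [← hp.2]; exact Nat.le_add_right _ _
  · intro a ha
    simp only [Finset.mem_filter, Finset.mem_product, Finset.Nat.mem_antidiagonalTuple] at ha ⊢
    refine ⟨⟨ha.1, ?_⟩, ?_⟩
    · have : ∑ j, (lam - a) j = ∑ j, lam j - ∑ j, a j := by
        simpa [Pi.sub_apply] using
          Finset.sum_tsub_distrib (Finset.univ : Finset (Fin d)) (fun j _ => ha.2 j)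
      rw [this, hlam, ha.1, Nat.add_sub_cancel_left]
    · funext j
      exact Nat.add_sub_cancel' (ha.2 j)
  · rintro ⟨a, b⟩ hp
    simp only [Finset.mem_filter] at hp
    have : lam - a = b := by
      funext j
      have := congrFun hp.2 j
      simp only [Pi.add_apply] at this
      simp only [Pi.sub_apply]
      omega
    simp [this]
  · intro a ha; rfl
  · intro p hp; rfl

theorem stmt12 (d n1 n2 : ℕ) (hd : 1 ≤ d) :
    TVDagg d n1 n2 ≤ TVDres d n1 n2 := by
  classical
  have hdk : n1 + n2 + d - 1 = n1 + n2 + (d - 1) := by omega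
  set S := Finset.Nat.antidiagonalTuple d n1 ×ˢ Finset.Nat.antidiagonalTuple d n2 with hS
  have hmaps : ∀ p ∈ S, p.1 + p.2 ∈ Finset.Nat.antidiagonalTuple d (n1 + n2) := by
    rintro ⟨a, b⟩ hp
    simp only [hS, Finset.mem_product, Finset.Nat.mem_antidiagonalTuple] at hp ⊢
    simp [Finset.sum_add_distrib, hp.1, hp.2]
  have hEq : ∀ lam ∈ Finset.Nat.antidiagonalTuple d (n1 + n2),
      1 / ((n1 + n2 + d - 1).choose (d - 1) : ℝ) -
        (Lfun lam n1 : ℝ) /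
          (((n1 + d - 1).choose (d - 1) : ℝ) * ((n2 + d - 1).choose (d - 1) : ℝ))
      = ∑ p ∈ S.filter (fun p => p.1 + p.2 = lam),
          (Psh d n1 n2 p.1 p.2 - Pind d n1 n2) := by
    intro lam hlam'
    have hlam : ∑ j, lam j = n1 + n2 := Finset.Nat.mem_antidiagonalTuple.mp hlam'
    rw [Finset.sum_sub_distrib]
    congr 1
    · -- ∑ Psh over the fiber equals 1/M
      have hPsh : ∀ p ∈ S.filter (fun p => p.1 + p.2 = lam),
          Psh d n1 n2 p.1 p.2
            = ((n1.factorial : ℝ) * n2.factorial * (d - 1).factorial /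
                ((n1 + n2 + d - 1).factorial : ℝ))
              * ((∏ j, (lam j).choose (p.1 j) : ℕ) : ℝ) := by
        rintro ⟨a, b⟩ hp
        simp only [Finset.mem_filter] at hp
        have hab : a + b = lam := hp.2
        rw [Psh]
        congr 1
        push_cast
        refine Finset.prod_congr rfl fun j _ => ?_
        have h1 : a j + b j = lam j := congrFun hab j
        have h2 : (lam j).choose (a j) * (a j).factorial * (b j).factorial
            = (lam j).factorial := by
          have h := Nat.choose_mul_factorial_mul_factorial (show a j ≤ lam j by omega)
          have hb : lam j - a j = b j := by omega
          rwa [hb] at h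
        have hfa : (0:ℝ) < ((a j).factorial : ℝ) := by positivity
        have hfb : (0:ℝ) < ((b j).factorial : ℝ) := by positivity
        rw [h1, div_eq_iff (by positivity)]
        have h2' := congrArg (Nat.cast : ℕ → ℝ) h2
        push_cast at h2'
        linarith [h2']
      rw [Finset.sum_congr rfl hPsh, ← Finset.mul_sum,
        fiber_sum lam hlam (f := fun a => ((∏ j, (lam j).choose (a j) : ℕ) : ℝ))]
      have hext : ∑ a ∈ (Finset.Nat.antidiagonalTuple d n1).filter
            (fun a => ∀ j, a j ≤ lam j), (∏ j, (lam j).choose (a j))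
          = ∑ a ∈ Finset.Nat.antidiagonalTuple d n1, ∏ j, (lam j).choose (a j) := by
        apply Finset.sum_filter_of_ne
        intro a _ hne j
        by_contra h
        apply hne
        exact Finset.prod_eq_zero (Finset.mem_univ j)
          (Nat.choose_eq_zero_of_lt (by omega))
      rw [← Nat.cast_sum, hext, vand, hlam]
      -- arithmetic identity
      have h3 := Nat.add_choose_mul_factorial_mul_factorial (n1 + n2) (d - 1)
      have h4 : (n1 + n2).choose n1 * n1.factorial * n2.factorial
          = (n1 + n2).factorial := by
        have h := Nat.choose_mul_factorial_mul_factorial (Nat.le_add_right n1 n2)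
        simpa [Nat.add_sub_cancel_left] using h
      have h3' := congrArg (Nat.cast : ℕ → ℝ) h3
      have h4' := congrArg (Nat.cast : ℕ → ℝ) h4
      push_cast at h3' h4'
      rw [hdk]
      have hMpos : (0:ℝ) < ((n1 + n2 + (d - 1)).choose (d - 1) : ℝ) := by
        exact_mod_cast Nat.choose_pos (Nat.le_add_left _ _)
      have hfac : (0:ℝ) < ((n1 + n2 + (d - 1)).factorial : ℝ) := by positivity
      field_simp
      linear_combination (-(((d - 1).factorial : ℝ) * (((n1 + n2 + (d - 1)).choose (d - 1) : ℕ) : ℝ))) * h4' - h3'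
    · -- ∑ Pind over the fiber equals Lfun/(M1*M2)
      have hcard := fiber_sum lam hlam (f := fun _ : Fin d → ℕ => (1 : ℕ))
      simp only [Finset.sum_const, smul_eq_mul, mul_one] at hcard
      rw [Finset.sum_const, nsmul_eq_mul, hcard]
      rw [Pind, Lfun, mul_one_div]
  calc TVDagg d n1 n2
      = (1 / 2) * ∑ lam ∈ Finset.Nat.antidiagonalTuple d (n1 + n2),
          |∑ p ∈ S.filter (fun p => p.1 + p.2 = lam),
            (Psh d n1 n2 p.1 p.2 - Pind d n1 n2)| := by
        rw [TVDagg]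
        congr 1
        exact Finset.sum_congr rfl fun lam hlam => by rw [hEq lam hlam]
    _ ≤ (1 / 2) * ∑ lam ∈ Finset.Nat.antidiagonalTuple d (n1 + n2),
          ∑ p ∈ S.filter (fun p => p.1 + p.2 = lam),
            |Psh d n1 n2 p.1 p.2 - Pind d n1 n2| := by
        apply mul_le_mul_of_nonneg_left _ (by norm_num)
        exact Finset.sum_le_sum fun lam _ => Finset.abs_sum_le_sum_abs _ _
    _ = (1 / 2) * ∑ p ∈ S, |Psh d n1 n2 p.1 p.2 - Pind d n1 n2| := by
        rw [Finset.sum_fiberwise_of_maps_to hmaps]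
    _ = TVDres d n1 n2 := by
        rw [TVDres, hS, Finset.sum_product]

end
end
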